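/- arXiv:1503.00885 — 8 statements merged into one kernel-verified Lean document; each statement's English description precedes it below -/
import Mathlib

section
/- If λ = (λ₁, ..., λ_c) is a partition of n with all parts positive and λ₁ - 1 ≤ c, then the Bulgarian solitaire move B(λ), obtained by decreasing each part by 1 (discarding zeros) and adding a new part equal to c, preserves the potential energy U(λ) = Σ (i+j) over all cells (i,j) of the Young diagram of λ. -/
/-! Sort the rows in nonincreasing order. Because every part is at most `c + 1`, the new part `c`
is the top row of `B(λ)`, and below it come the rows of `λ` with their first cell removed, each
moved down by one (rows that become empty fall off the bottom). Moving cell `(i, j + 1)` to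
`(i + 1, j)` keeps its weight, and the removed first column, with weights `2, …, c + 1`, carries
exactly the weights of the new top row. -/

/-- A partition of `n`: a multiset of positive integers summing to `n`
(multisets model nonincreasing sequences, since order is irrelevant). -/
def IsPartition (n : ℕ) (l : Multiset ℕ) : Prop :=
  l.sum = n ∧ ∀ x ∈ l, 0 < x

/-- The Bulgarian solitaire move: remove one card from each pile, discard empty
piles, and add a new pile whose size is the number of old piles. -/
def bulg (l : Multiset ℕ) : Multiset ℕ :=
  (Multiset.card l ::ₘ l.map (· - 1)).filter (0 < ·)

/-- The staircase partition `(k, k-1, …, 2, 1)`. -/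
def staircase (k : ℕ) : Multiset ℕ := (Multiset.range k).map (· + 1)

/-- Potential energy `U(λ) = Σ (i + j)` over the cells of the Young diagram,
the rows taken in nonincreasing order. -/
def energy (l : Multiset ℕ) : ℕ :=
  ((l.sort (· ≥ ·)).zipIdx.map fun p => ∑ j ∈ Finset.range p.1, ((p.2 + 1) + (j + 1))).sum

open Finset

/-- The energy of the rows `L`, listed top to bottom, the first of them being row `k`
(counted from `0`). -/
def rowsEnergy : ℕ → List ℕ → ℕ
  | _, [] => 0
  | k, a :: L => ∑ j ∈ range a, (k + 1 + (j + 1)) + rowsEnergy (k + 1) L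

theorem sum_zipIdx_eq_rowsEnergy (L : List ℕ) (k : ℕ) :
    ((L.zipIdx k).map fun p => ∑ j ∈ range p.1, ((p.2 + 1) + (j + 1))).sum = rowsEnergy k L := by
  induction L generalizing k with
  | nil => rfl
  | cons a L ih => simp [rowsEnergy, ih]

theorem energy_eq_rowsEnergy (l : Multiset ℕ) : energy l = rowsEnergy 0 (l.sort (· ≥ ·)) :=
  sum_zipIdx_eq_rowsEnergy _ 0

theorem rowsEnergy_of_forall_eq_zero {L : List ℕ} (hL : ∀ x ∈ L, x = 0) (k : ℕ) :
    rowsEnergy k L = 0 := by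
  induction L generalizing k with
  | nil => rfl
  | cons a L ih =>
    simp only [List.mem_cons, forall_eq_or_imp] at hL
    simp [rowsEnergy, hL.1, ih hL.2]

/-- In a nonincreasing list the zero rows form a suffix, so dropping them moves no other row. -/
theorem rowsEnergy_filter_pos {L : List ℕ} (hL : L.Pairwise (· ≥ ·)) (k : ℕ) :
    rowsEnergy k (L.filter (0 < ·)) = rowsEnergy k L := by
  induction L generalizing k with
  | nil => rfl
  | cons a L ih =>
    rw [List.pairwise_cons] at hL
    rcases Nat.eq_zero_or_pos a with rfl | ha
    · have hzero : ∀ x ∈ 0 :: L, x = 0 := by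
        simp only [List.mem_cons, forall_eq_or_imp, true_and]
        exact fun x hx => Nat.le_zero.mp (hL.1 x hx)
      rw [List.filter_eq_nil_iff.mpr fun x hx => by simp [hzero x hx],
        rowsEnergy_of_forall_eq_zero hzero]
      rfl
    · rw [List.filter_cons_of_pos (by simpa using ha)]
      simp only [rowsEnergy, ih hL.2]

theorem sum_range_succ_row (k a : ℕ) :
    ∑ j ∈ range (a + 1), (k + 1 + (j + 1)) = (k + 2) + ∑ j ∈ range a, (k + 1 + 1 + (j + 1)) := by
  rw [sum_range_succ', add_comm]
  congr 1
  exact sum_congr rfl fun j _ => by omega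

theorem rowsEnergy_map_pred_add {L : List ℕ} (hL : ∀ x ∈ L, 0 < x) (k : ℕ) :
    rowsEnergy (k + 1) (L.map (· - 1)) + ∑ i ∈ range L.length, (k + 1 + (i + 1))
      = rowsEnergy k L := by
  induction L generalizing k with
  | nil => rfl
  | cons a L ih =>
    simp only [List.mem_cons, forall_eq_or_imp] at hL
    obtain ⟨b, rfl⟩ := Nat.exists_eq_add_one_of_ne_zero hL.1.ne'
    have hrest := ih hL.2 (k + 1)
    simp only [rowsEnergy, List.map_cons, List.length_cons, sum_range_succ_row,
      Nat.add_sub_cancel] at hrest ⊢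
    omega

theorem pairwise_card_cons_map_pred_sort (l : Multiset ℕ) (h : ∀ x ∈ l, x ≤ Multiset.card l + 1) :
    (Multiset.card l :: (l.sort (· ≥ ·)).map (· - 1)).Pairwise (· ≥ ·) := by
  refine List.pairwise_cons.mpr ⟨?_, ?_⟩
  · simp only [List.mem_map, Multiset.mem_sort]
    rintro _ ⟨y, hy, rfl⟩
    have := h y hy
    omega
  · exact (Multiset.pairwise_sort l _).map _ fun a b hab => Nat.sub_le_sub_right hab 1

theorem sort_bulg (l : Multiset ℕ) (h : ∀ x ∈ l, x ≤ Multiset.card l + 1) :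
    (bulg l).sort (· ≥ ·) =
      (Multiset.card l :: (l.sort (· ≥ ·)).map (· - 1)).filter (0 < ·) := by
  have hbulg : bulg l = ↑((Multiset.card l :: (l.sort (· ≥ ·)).map (· - 1)).filter (0 < ·)) := by
    rw [bulg, ← Multiset.filter_coe, ← Multiset.cons_coe, ← Multiset.map_coe, Multiset.sort_eq]
  rw [hbulg, Multiset.coe_sort]
  exact List.mergeSort_eq_self _
    (by simpa using (pairwise_card_cons_map_pred_sort l h).sublist List.filter_sublist)

/-- If the largest part satisfies λ₁ - 1 ≤ c where c is the number of parts
(i.e. every part is ≤ c + 1), then the Bulgarian solitaire move preserves the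
potential energy. -/
theorem bulg_energy_eq (n : ℕ) (l : Multiset ℕ) (hl : IsPartition n l)
    (h : ∀ x ∈ l, x ≤ Multiset.card l + 1) :
    energy (bulg l) = energy l := by
  have hpos : ∀ x ∈ l.sort (· ≥ ·), 0 < x := fun x hx => hl.2 x ((Multiset.mem_sort _).mp hx)
  calc energy (bulg l)
      = rowsEnergy 0 ((Multiset.card l :: (l.sort (· ≥ ·)).map (· - 1)).filter (0 < ·)) := by
        rw [energy_eq_rowsEnergy, sort_bulg l h]
    _ = rowsEnergy 0 (Multiset.card l :: (l.sort (· ≥ ·)).map (· - 1)) :=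
        rowsEnergy_filter_pos (pairwise_card_cons_map_pred_sort l h) 0
    _ = rowsEnergy 1 ((l.sort (· ≥ ·)).map (· - 1))
          + ∑ i ∈ range (l.sort (· ≥ ·)).length, (0 + 1 + (i + 1)) := by
        rw [rowsEnergy, add_comm, Multiset.length_sort]
    _ = energy l := by rw [rowsEnergy_map_pred_add hpos 0, energy_eq_rowsEnergy]
end

section
/- If n = k(k+1)/2 is a triangular number, then for every partition λ of n there exists s ≥ 0 such that B^s(λ) = (k, k-1, ..., 2, 1), where B is the Bulgarian solitaire operator. -/
/-!
The potential `energy` never increases under `bulg`, and it strictly decreases unless the new pile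
is at least as large as every other pile. Along any orbit it is therefore eventually constant, and
from then on each move merely rotates every diagonal of the Young diagram cyclically, the `d`-th
diagonal having `d` cells. As `d` and `d + 1` are coprime, a cell on diagonal `d + 1` and a hole on
diagonal `d` would at some time lie in column 1 with the hole directly above the cell, which is
impossible. So every diagonal below a nonempty one is full. If diagonal `k + 1` is nonempty,
diagonal `k` is full and the partition dominates the staircase `k` column by column; otherwise
all diagonals beyond `k` are empty and the staircase dominates it. The sums agree, so the two
coincide.
-/

open Multiset

namespace BulgarianSolitaire

theorem sum_map_filter_pos {f : ℕ → ℕ} (hf : f 0 = 0) (m : Multiset ℕ) :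
    ((m.filter (0 < ·)).map f).sum = (m.map f).sum := by
  induction m using Multiset.induction with
  | empty => rfl
  | cons a t ih =>
    rcases Nat.eq_zero_or_pos a with rfl | ha
    · simp [hf, ih]
    · simp [ha, ih]

theorem sum_map_add_card {t : Multiset ℕ} {f g : ℕ → ℕ} (h : ∀ x ∈ t, f x + 1 = g x) :
    (t.map f).sum + card t = (t.map g).sum := by
  induction t using Multiset.induction with
  | empty => rfl
  | cons a t ih =>
    have := ih fun x hx => h x (mem_cons_of_mem hx)
    have := h a (mem_cons_self a t)
    simp only [map_cons, sum_cons, card_cons]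
    omega

theorem sum_bulg {l : Multiset ℕ} (hpos : ∀ x ∈ l, 0 < x) : (bulg l).sum = l.sum := by
  have hfilter := sum_map_filter_pos (f := id) rfl (card l ::ₘ l.map (· - 1))
  have hpred := sum_map_add_card (f := (· - 1)) (g := id) fun x hx =>
    Nat.sub_add_cancel (hpos x hx)
  rw [map_id, map_id] at hfilter
  rw [map_id] at hpred
  rw [bulg, hfilter, sum_cons, ← hpred, add_comm]

theorem pos_of_mem_bulg (l : Multiset ℕ) : ∀ x ∈ bulg l, 0 < x :=
  fun _ hx => of_mem_filter hx

theorem pos_of_mem_iterate_bulg {l : Multiset ℕ} (hpos : ∀ x ∈ l, 0 < x) (s : ℕ) :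
    ∀ x ∈ bulg^[s] l, 0 < x := by
  cases s with
  | zero => exact hpos
  | succ s => rw [Function.iterate_succ_apply']; exact pos_of_mem_bulg _

theorem isPartition_iterate_bulg {n : ℕ} {l : Multiset ℕ} (hl : IsPartition n l) (s : ℕ) :
    IsPartition n (bulg^[s] l) := by
  induction s with
  | zero => exact hl
  | succ s ih =>
    rw [Function.iterate_succ_apply']
    exact ⟨(sum_bulg ih.2).trans ih.1, pos_of_mem_bulg _⟩

def colLen (l : Multiset ℕ) (j : ℕ) : ℕ := l.countP (j ≤ ·)

theorem colLen_cons (a : ℕ) (t : Multiset ℕ) (j : ℕ) :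
    colLen (a ::ₘ t) j = colLen t j + if j ≤ a then 1 else 0 :=
  countP_cons _ _ _

theorem colLen_one {l : Multiset ℕ} (hpos : ∀ x ∈ l, 0 < x) : colLen l 1 = card l :=
  countP_eq_card.mpr hpos

theorem colLen_eq_zero {l : Multiset ℕ} {j : ℕ} (h : ∀ x ∈ l, x < j) : colLen l j = 0 :=
  countP_eq_zero.mpr fun x hx => by have := h x hx; omega

theorem colLen_bulg (l : Multiset ℕ) {j : ℕ} (hj : 1 ≤ j) :
    colLen (bulg l) j = (if j ≤ card l then 1 else 0) + colLen l (j + 1) := by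
  have hfilter : colLen (bulg l) j = colLen (card l ::ₘ l.map (· - 1)) j := by
    simp only [colLen, bulg, countP_filter]
    exact countP_congr rfl fun x _ => propext ⟨And.left, fun h => ⟨h, by omega⟩⟩
  have hmap : colLen (l.map (· - 1)) j = colLen l (j + 1) := by
    rw [colLen, countP_map, ← countP_eq_card_filter]
    exact countP_congr rfl fun x _ => propext ⟨fun h => by omega, fun h => by omega⟩
  rw [hfilter, colLen_cons, hmap, add_comm]

theorem colLen_eq_colLen_succ_add_count (l : Multiset ℕ) (x : ℕ) :
    colLen l x = colLen l (x + 1) + count x l := by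
  induction l using Multiset.induction with
  | empty => rfl
  | cons a t ih =>
    rw [colLen_cons, colLen_cons, count_cons]
    split_ifs <;> omega

theorem eq_of_colLen_eq {a b : Multiset ℕ} (ha : ∀ x ∈ a, 0 < x) (hb : ∀ x ∈ b, 0 < x)
    (h : ∀ j, 1 ≤ j → colLen a j = colLen b j) : a = b := by
  ext x
  rcases Nat.eq_zero_or_pos x with rfl | hx
  · rw [count_eq_zero.mpr fun h0 => (ha 0 h0).false, count_eq_zero.mpr fun h0 => (hb 0 h0).false]
  · have := colLen_eq_colLen_succ_add_count a x
    have := colLen_eq_colLen_succ_add_count b x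
    have := h x hx
    have := h (x + 1) (by omega)
    omega

theorem sum_range_colLen {l : Multiset ℕ} {M : ℕ} (hM : ∀ x ∈ l, x ≤ M) :
    ∑ j ∈ Finset.range M, colLen l (j + 1) = l.sum := by
  induction l using Multiset.induction with
  | empty => simp [colLen]
  | cons a t ih =>
    have ha : a ≤ M := hM a (mem_cons_self a t)
    simp only [colLen_cons, Finset.sum_add_distrib, ih fun x hx => hM x (mem_cons_of_mem hx),
      Finset.sum_boole, sum_cons]
    have : (Finset.range M).filter (· + 1 ≤ a) = Finset.range a := by
      ext j
      simp only [Finset.mem_filter, Finset.mem_range]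
      omega
    rw [this, Finset.card_range, Nat.cast_id, add_comm]

theorem eq_of_colLen_le_of_sum_le {a b : Multiset ℕ} (ha : ∀ x ∈ a, 0 < x)
    (hb : ∀ x ∈ b, 0 < x) (hle : ∀ j, 1 ≤ j → colLen a j ≤ colLen b j)
    (hsum : b.sum ≤ a.sum) : a = b := by
  set M := a.sum + b.sum
  have haM : ∀ x ∈ a, x ≤ M := fun x hx => (le_sum_of_mem hx).trans (Nat.le_add_right _ _)
  have hbM : ∀ x ∈ b, x ≤ M := fun x hx => (le_sum_of_mem hx).trans (Nat.le_add_left _ _)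
  have hrange : ∀ j ∈ Finset.range M, colLen a (j + 1) = colLen b (j + 1) := by
    refine (Finset.sum_eq_sum_iff_of_le fun j _ => hle (j + 1) j.succ_pos).mp ?_
    refine le_antisymm (Finset.sum_le_sum fun j _ => hle (j + 1) j.succ_pos) ?_
    rwa [sum_range_colLen haM, sum_range_colLen hbM]
  refine eq_of_colLen_eq ha hb fun j hj => ?_
  by_cases hjM : j ≤ M
  · simpa [Nat.sub_add_cancel hj] using hrange (j - 1) (Finset.mem_range.mpr (by omega))
  · rw [colLen_eq_zero fun x hx => (haM x hx).trans_lt (by omega),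
      colLen_eq_zero fun x hx => (hbM x hx).trans_lt (by omega)]

theorem colLen_staircase (k : ℕ) {j : ℕ} (hj : 1 ≤ j) :
    colLen (staircase k) j = k + 1 - j := by
  induction k with
  | zero => rw [colLen_eq_zero (l := staircase 0) (by simp [staircase])]; omega
  | succ k ih =>
    rw [staircase, range_succ, map_cons, ← staircase, colLen_cons, ih]
    split_ifs <;> omega

theorem pos_of_mem_staircase (k : ℕ) : ∀ x ∈ staircase k, 0 < x := by
  simp [staircase]

theorem sum_staircase (k : ℕ) : (staircase k).sum = k * (k + 1) / 2 := by
  have : (staircase k).sum = ∑ i ∈ Finset.range (k + 1), i := by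
    rw [Finset.sum_range_succ']
    rfl
  rw [this, Finset.sum_range_id, Nat.add_sub_cancel, mul_comm]

def minSum (s t : Multiset ℕ) : ℕ := (s.map fun a => (t.map (min a)).sum).sum

-- Twice the sum, over the cells of the Young diagram, of the index `d` of the diagonal holding the
-- cell (see `DiagCell`), plus `2 * l.sum`: indeed `minSum l l = ∑ⱼ (colLen l j)²`.
def energy (l : Multiset ℕ) : ℕ := (l.map fun x => x * (x + 2)).sum + minSum l l

-- The new pile `card l` of `bulg l` is at least every other pile `x - 1`, so no re-sorting occurs.
def NewPileIsMax (l : Multiset ℕ) : Prop := ∀ x ∈ l, x ≤ card l + 1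

theorem energy_cons (a : ℕ) (t : Multiset ℕ) :
    energy (a ::ₘ t) = energy t + a * (a + 3) + 2 * (t.map (min a)).sum := by
  have hcomm : (t.map fun b => min b a).sum = (t.map (min a)).sum :=
    congrArg sum (map_congr rfl fun b _ => min_comm b a)
  simp only [energy, minSum, map_cons, sum_cons, min_self, sum_map_add, hcomm]
  ring

theorem energy_filter_pos (m : Multiset ℕ) : energy (m.filter (0 < ·)) = energy m := by
  simp only [energy, minSum, sum_map_filter_pos (f := fun x => x * (x + 2)) (by simp),
    sum_map_filter_pos (f := min _) (Nat.min_zero _)]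
  rw [sum_map_filter_pos (by simp)]

theorem energy_map_pred {l : Multiset ℕ} (hpos : ∀ x ∈ l, 0 < x) :
    energy l = energy (l.map (· - 1)) + 2 * l.sum + card l + card l * card l := by
  induction l using Multiset.induction with
  | empty => rfl
  | cons a t ih =>
    have ht : ∀ x ∈ t, 0 < x := fun x hx => hpos x (mem_cons_of_mem hx)
    obtain ⟨b, rfl⟩ : ∃ b, a = b + 1 :=
      ⟨a - 1, by have := hpos a (mem_cons_self a t); omega⟩
    have hmin : ((t.map (· - 1)).map (min b)).sum + card t = (t.map (min (b + 1))).sum := by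
      rw [map_map]
      exact sum_map_add_card fun x hx => by have := ht x hx; simp only [Function.comp]; omega
    rw [map_cons, energy_cons, energy_cons, ih ht, sum_cons, card_cons, Nat.add_sub_cancel,
      ← hmin]
    ring

theorem energy_bulg_add {l : Multiset ℕ} (hpos : ∀ x ∈ l, 0 < x) :
    energy (bulg l) + 2 * (l.map (· - (card l + 1))).sum = energy l := by
  have hsplit : ((l.map (· - 1)).map (min (card l))).sum + (l.map (· - (card l + 1))).sum
      + card l = l.sum := by
    rw [map_map, ← sum_map_add]
    refine (sum_map_add_card (g := id) fun x hx => ?_).trans (congrArg sum (map_id l))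
    have := hpos x hx
    simp only [Function.comp, id]
    omega
  rw [bulg, energy_filter_pos, energy_cons, energy_map_pred hpos]
  linarith

theorem energy_bulg_le {l : Multiset ℕ} (hpos : ∀ x ∈ l, 0 < x) :
    energy (bulg l) ≤ energy l :=
  (energy_bulg_add hpos).symm ▸ Nat.le_add_right _ _

theorem newPileIsMax_of_energy_bulg_eq {l : Multiset ℕ} (hpos : ∀ x ∈ l, 0 < x)
    (h : energy (bulg l) = energy l) : NewPileIsMax l := by
  have hzero : (l.map (· - (card l + 1))).sum = 0 := by
    have := energy_bulg_add hpos
    omega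
  intro x hx
  have := sum_eq_zero_iff.mp hzero _ (mem_map_of_mem _ hx)
  omega

-- The Young diagram of `l` has a cell in row `i` (0-indexed) and column `d - i` (1-indexed).
def DiagCell (l : Multiset ℕ) (d i : ℕ) : Prop := i < colLen l (d - i)

theorem diagCell_bulg_iff {l : Multiset ℕ} (hpos : ∀ x ∈ l, 0 < x) (hl : NewPileIsMax l)
    {d i : ℕ} (hi : i < d) : DiagCell (bulg l) d ((i + 1) % d) ↔ DiagCell l d i := by
  have hlong : ∀ j, card l + 2 ≤ j → colLen l j = 0 :=
    fun j hj => colLen_eq_zero fun x hx => by have := hl x hx; omega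
  rcases Nat.lt_or_ge (i + 1) d with hi1 | hi1
  · rw [Nat.mod_eq_of_lt hi1, DiagCell, DiagCell, show d - (i + 1) = d - i - 1 by omega,
      colLen_bulg l (by omega), show d - i - 1 + 1 = d - i by omega]
    have := hlong (d - i)
    split_ifs <;> omega
  · obtain rfl : d = i + 1 := by omega
    rw [Nat.mod_self, DiagCell, DiagCell, Nat.sub_zero, Nat.add_sub_cancel_left, colLen_one hpos,
      colLen_bulg l (by omega)]
    have := hlong (i + 1 + 1)
    split_ifs <;> omega

theorem diagCell_iterate_bulg_iff {μ : Multiset ℕ} (hpos : ∀ x ∈ μ, 0 < x)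
    (hμ : ∀ s, NewPileIsMax (bulg^[s] μ)) {d i : ℕ} (hi : i < d) (s : ℕ) :
    DiagCell (bulg^[s] μ) d ((i + s) % d) ↔ DiagCell μ d i := by
  induction s with
  | zero => rw [Nat.add_zero, Nat.mod_eq_of_lt hi]; rfl
  | succ s ih =>
    rw [Function.iterate_succ_apply', ← Nat.add_assoc, ← Nat.mod_add_mod]
    exact (diagCell_bulg_iff (pos_of_mem_iterate_bulg hpos s) (hμ s)
      (Nat.mod_lt _ (by omega))).trans ih

theorem diagCell_of_diagCell_succ {μ : Multiset ℕ} (hpos : ∀ x ∈ μ, 0 < x)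
    (hμ : ∀ s, NewPileIsMax (bulg^[s] μ)) {d y : ℕ} (hy : y ≤ d)
    (hcell : DiagCell μ (d + 1) y) {x : ℕ} (hx : x < d) : DiagCell μ d x := by
  -- After `s` moves the hole is in row `d - 1` and the cell in row `d`, both in column 1.
  obtain ⟨s, hsx, hsy⟩ := Nat.chineseRemainder
    (Nat.coprime_self_add_right.mpr (Nat.coprime_one_right d)) (d - 1 - x) (d - y)
  have hx' : (x + s) % d = d - 1 := by
    rw [Nat.ModEq.add_left x hsx, show x + (d - 1 - x) = d - 1 by omega]
    exact Nat.mod_eq_of_lt (by omega)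
  have hy' : (y + s) % (d + 1) = d := by
    rw [Nat.ModEq.add_left y hsy, show y + (d - y) = d by omega]
    exact Nat.mod_eq_of_lt (by omega)
  have hbelow := (diagCell_iterate_bulg_iff hpos hμ (by omega : y < d + 1) s).mpr hcell
  rw [hy', DiagCell, Nat.add_sub_cancel_left] at hbelow
  rw [← diagCell_iterate_bulg_iff hpos hμ hx s, hx', DiagCell, Nat.sub_sub_self (by omega)]
  omega

theorem exists_diagCell_of_le {μ : Multiset ℕ} (hpos : ∀ x ∈ μ, 0 < x)
    (hμ : ∀ s, NewPileIsMax (bulg^[s] μ)) {d e : ℕ} (hd : 0 < d) (hde : d ≤ e)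
    (he : ∃ y < e, DiagCell μ e y) : ∃ y < d, DiagCell μ d y := by
  induction e, hde using Nat.le_induction with
  | base => exact he
  | succ e hde ih =>
    obtain ⟨y, hy, hcell⟩ := he
    exact ih ⟨0, by omega, diagCell_of_diagCell_succ hpos hμ (by omega) hcell (by omega)⟩

theorem eq_staircase_of_forall_newPileIsMax (k : ℕ) {μ : Multiset ℕ}
    (hpos : ∀ x ∈ μ, 0 < x) (hsum : μ.sum = (staircase k).sum)
    (hμ : ∀ s, NewPileIsMax (bulg^[s] μ)) :
    μ = staircase k := by
  by_cases htop : ∃ y < k + 1, DiagCell μ (k + 1) y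
  · obtain ⟨y, hy, hcell⟩ := htop
    refine (eq_of_colLen_le_of_sum_le (pos_of_mem_staircase k) hpos (fun j hj => ?_)
      hsum.le).symm
    rw [colLen_staircase k hj]
    by_cases hjk : j ≤ k
    · have := diagCell_of_diagCell_succ hpos hμ (by omega) hcell (x := k - j) (by omega)
      rw [DiagCell, Nat.sub_sub_self hjk] at this
      omega
    · omega
  · refine eq_of_colLen_le_of_sum_le hpos (pos_of_mem_staircase k) (fun j hj => ?_) hsum.ge
    rw [colLen_staircase k hj]
    by_contra hlong
    refine htop (exists_diagCell_of_le hpos hμ k.succ_pos (by omega : k + 1 ≤ j + (k + 1 - j))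
      ⟨k + 1 - j, by omega, ?_⟩)
    rw [DiagCell, Nat.add_sub_cancel]
    omega

theorem exists_forall_newPileIsMax_iterate {n : ℕ} {l : Multiset ℕ} (hl : IsPartition n l) :
    ∃ T, ∀ s, NewPileIsMax (bulg^[s] (bulg^[T] l)) := by
  have hanti : Antitone fun s => energy (bulg^[s] l) := antitone_nat_of_succ_le fun s => by
    rw [Function.iterate_succ_apply']
    exact energy_bulg_le (isPartition_iterate_bulg hl s).2
  obtain ⟨T, hT⟩ := WellFoundedLT.antitone_chain_condition hanti
  refine ⟨T, fun s => ?_⟩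
  rw [← Function.iterate_add_apply]
  refine newPileIsMax_of_energy_bulg_eq (isPartition_iterate_bulg hl _).2 ?_
  rw [← Function.iterate_succ_apply' bulg]
  exact (hT _ (by omega)).symm.trans (hT _ (by omega))

end BulgarianSolitaire

open BulgarianSolitaire

/-- For triangular n = k(k+1)/2, every partition of n eventually reaches the
staircase partition under iteration of the Bulgarian solitaire operator. -/
theorem bulg_reaches_staircase (k n : ℕ) (hn : n = k * (k + 1) / 2)
    (l : Multiset ℕ) (hl : IsPartition n l) :
    ∃ s : ℕ, bulg^[s] l = staircase k := by
  obtain ⟨T, hT⟩ := exists_forall_newPileIsMax_iterate hl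
  have hμ := isPartition_iterate_bulg hl T
  refine ⟨T, eq_staircase_of_forall_newPileIsMax k hμ.2 ?_ hT⟩
  rw [hμ.1, hn, sum_staircase]
end

section
/- If n = k(k+1)/2 is triangular and λ is a partition of n that is a fixed point of the Bulgarian solitaire operator B, then λ = (k, k-1, ..., 2, 1). -/
open Multiset

lemma count_map_pred_of_pos {l : Multiset ℕ} (hl : ∀ x ∈ l, 0 < x) (j : ℕ) :
    count j (l.map (· - 1)) = count (j + 1) l := by
  rw [count_map, count_eq_card_filter_eq]
  congr 1
  refine filter_congr fun x hx => ?_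
  have := hl x hx
  omega

lemma count_bulg_of_pos {l : Multiset ℕ} (hl : ∀ x ∈ l, 0 < x) {j : ℕ} (hj : 0 < j) :
    count j (bulg l) = count (j + 1) l + if j = card l then 1 else 0 := by
  rw [bulg, count_filter_of_pos hj, count_cons, count_map_pred_of_pos hl]

lemma eq_ite_le_of_forall_eq_succ_add {f : ℕ → ℕ} {c N : ℕ}
    (hf : ∀ j, 0 < j → f j = f (j + 1) + if j = c then 1 else 0)
    (hN : ∀ j, N < j → f j = 0) {j : ℕ} (hj : 0 < j) :
    f j = if j ≤ c then 1 else 0 := by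
  suffices ∀ m j, 0 < j → max N c < j + m → f j = if j ≤ c then 1 else 0 from
    this (max N c + 1) j hj (by omega)
  intro m
  induction m with
  | zero =>
    intro j _ hj
    rw [hN j (by omega), if_neg (by omega)]
  | succ m ih =>
    intro j hj0 hj
    rw [hf j hj0, ih (j + 1) (by omega) (by omega)]
    split_ifs <;> omega

lemma count_staircase_succ (c i : ℕ) :
    count (i + 1) (staircase c) = if i < c then 1 else 0 := by
  rw [staircase, count_map_eq_count' _ _ (add_left_injective 1), count_eq_of_nodup (nodup_range c)]
  simp only [mem_range]

lemma eq_staircase_of_count {l : Multiset ℕ} {c : ℕ} (hl : ∀ x ∈ l, 0 < x)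
    (h : ∀ j, 0 < j → count j l = if j ≤ c then 1 else 0) : l = staircase c := by
  ext j
  rcases j with _ | i
  · rw [count_eq_zero.2 fun h0 => (hl 0 h0).false, count_eq_zero.2 (by simp [staircase])]
  · rw [h (i + 1) i.succ_pos, count_staircase_succ]
    simp only [Nat.add_one_le_iff]

lemma sum_staircase (c : ℕ) : (staircase c).sum = c * (c + 1) / 2 := by
  rw [staircase, ← Finset.range_val, ← Finset.sum_eq_multiset_sum]
  have := Finset.sum_range_succ' (fun i => i) c
  simp only [add_zero] at this
  rw [← this, Finset.sum_range_id, Nat.add_sub_cancel, mul_comm]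

lemma strictMono_triangle : StrictMono fun n : ℕ => n * (n + 1) / 2 :=
  strictMono_nat_of_lt_succ fun n => by
    have : (n + 1) * (n + 1 + 1) = n * (n + 1) + (n + 1) * 2 := by ring
    simp only [this, Nat.add_mul_div_right _ _ two_pos]
    omega

/-- For triangular n = k(k+1)/2, any fixed point of the Bulgarian solitaire
operator among the partitions of n is the staircase partition. -/
theorem bulg_fixed_eq_staircase (k n : ℕ) (hn : n = k * (k + 1) / 2)
    (l : Multiset ℕ) (hl : IsPartition n l) (hfix : bulg l = l) :
    l = staircase k := by
  obtain ⟨hsum, hpos⟩ := hl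
  have hstep : ∀ j, 0 < j → count j l = count (j + 1) l + if j = card l then 1 else 0 :=
    fun j hj => by simpa only [hfix] using count_bulg_of_pos hpos hj
  have hvanish : ∀ j, l.sum < j → count j l = 0 :=
    fun j hj => count_eq_zero.2 fun hmem => (le_sum_of_mem hmem).not_gt hj
  have hstair : l = staircase (card l) :=
    eq_staircase_of_count hpos fun j hj => eq_ite_le_of_forall_eq_succ_add hstep hvanish hj
  have hcard : card l = k :=
    strictMono_triangle.injective (by rw [← sum_staircase, ← hstair, hsum, hn])
  rwa [hcard] at hstair
end

section
/- A partition λ = (λ₁, ..., λ_s) of n with s positive parts is a Garden of Eden partition for the Bulgarian solitaire (i.e., λ is not in the image of the operator B on partitions of n) if and only if λ₁ < s - 1. -/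
/-!
A preimage `m` of `l` has `card m ∈ l` as its new pile (unless `m = 0`) and `card l ≤ card m + 1`,
so `card l - 1 ≤ l.sup`. Conversely, if the largest part `a` satisfies `card l ≤ a + 1`, take `a`
as the new pile: add one card to each remaining part and pad with `a + 1 - card l` singletons, so
that there are exactly `a` piles and the total is unchanged.
-/

theorem Multiset.sup_mem_of_ne_zero {α : Type*} [LinearOrder α] [OrderBot α] {s : Multiset α}
    (hs : s ≠ 0) : s.sup ∈ s := by
  induction s using Multiset.induction with
  | empty => exact absurd rfl hs
  | cons a s ih =>
    rw [Multiset.sup_cons]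
    rcases eq_or_ne s 0 with rfl | hs'
    · simp
    · rcases max_choice a s.sup with h | h <;> rw [h]
      · exact Multiset.mem_cons_self a s
      · exact Multiset.mem_cons_of_mem (ih hs')

open Multiset

theorem card_bulg_le (m : Multiset ℕ) : card (bulg m) ≤ card m + 1 := by
  calc card (bulg m) ≤ card (card m ::ₘ m.map (· - 1)) := card_le_card (filter_le _ _)
    _ = card m + 1 := by simp

theorem card_le_sup_bulg (m : Multiset ℕ) : card m ≤ (bulg m).sup := by
  rcases Nat.eq_zero_or_pos (card m) with h | h
  · exact h ▸ Nat.zero_le _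
  · exact le_sup (mem_filter.mpr ⟨mem_cons_self _ _, h⟩)

theorem card_bulg_sub_one_le_sup (m : Multiset ℕ) : card (bulg m) - 1 ≤ (bulg m).sup := by
  have := card_bulg_le m
  have := card_le_sup_bulg m
  omega

def bulgPreimage (l : Multiset ℕ) (a : ℕ) : Multiset ℕ :=
  (l.erase a).map (· + 1) + replicate (a + 1 - card l) 1

section bulgPreimage

variable {l : Multiset ℕ} {a : ℕ}

theorem pos_of_mem_bulgPreimage {x : ℕ} (hx : x ∈ bulgPreimage l a) : 0 < x := by
  rcases mem_add.mp hx with hx | hx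
  · obtain ⟨y, -, rfl⟩ := mem_map.mp hx
    exact y.succ_pos
  · exact (eq_of_mem_replicate hx).symm ▸ Nat.one_pos

theorem card_bulgPreimage (ha : a ∈ l) (hcard : card l ≤ a + 1) :
    card (bulgPreimage l a) = a := by
  have := card_pos_iff_exists_mem.mpr ⟨a, ha⟩
  simp only [bulgPreimage, card_add, card_map, card_erase_of_mem ha, Nat.pred_eq_sub_one,
    card_replicate]
  omega

theorem sum_bulgPreimage (ha : a ∈ l) (hcard : card l ≤ a + 1) :
    (bulgPreimage l a).sum = l.sum := by
  have := card_pos_iff_exists_mem.mpr ⟨a, ha⟩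
  have hl : l.sum = a + (l.erase a).sum := by rw [← sum_cons, cons_erase ha]
  simp only [bulgPreimage, sum_add, sum_map_add, map_const', sum_replicate, smul_eq_mul,
    mul_one, map_id', card_erase_of_mem ha, Nat.pred_eq_sub_one, hl]
  omega

theorem bulg_bulgPreimage (ha : a ∈ l) (hcard : card l ≤ a + 1) (hpos : ∀ x ∈ l, 0 < x) :
    bulg (bulgPreimage l a) = l := by
  have herase : (l.erase a).filter (0 < ·) = l.erase a :=
    filter_eq_self.mpr fun x hx => hpos x (mem_of_mem_erase hx)
  have hzeros : (replicate (a + 1 - card l) 0).filter (0 < ·) = 0 :=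
    filter_eq_nil.mpr fun x hx => (eq_of_mem_replicate hx).symm ▸ lt_irrefl 0
  rw [bulg, card_bulgPreimage ha hcard, bulgPreimage, Multiset.map_add, map_map,
    map_replicate, filter_cons_of_pos _ (hpos a ha), filter_add]
  simp only [Function.comp_def, Nat.add_sub_cancel, map_id', Nat.sub_self, herase, hzeros,
    add_zero, cons_erase ha]

end bulgPreimage

/-- A partition of n with s parts and largest part λ₁ is a Garden of Eden
partition (no preimage under the Bulgarian solitaire operator among partitions
of n) if and only if λ₁ < s - 1. -/
theorem gardenOfEden_iff (n : ℕ) (l : Multiset ℕ) (hl : IsPartition n l) :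
    (¬ ∃ m : Multiset ℕ, IsPartition n m ∧ bulg m = l) ↔
      l.sup < Multiset.card l - 1 := by
  obtain ⟨hsum, hpos⟩ := hl
  constructor
  · intro hnone
    by_contra! hle
    apply hnone
    rcases eq_or_ne l 0 with rfl | hne
    · exact ⟨0, ⟨hsum, hpos⟩, rfl⟩
    have hmem := sup_mem_of_ne_zero hne
    have hcard : card l ≤ l.sup + 1 := by omega
    exact ⟨bulgPreimage l l.sup, ⟨(sum_bulgPreimage hmem hcard).trans hsum,
      fun _ => pos_of_mem_bulgPreimage⟩, bulg_bulgPreimage hmem hcard hpos⟩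
  · rintro hlt ⟨m, -, rfl⟩
    exact (card_bulg_sub_one_le_sup m).not_gt hlt
end

section
/- Starting from the partition τ = (k-1, k-1, k-2, k-3, ..., 3, 2, 1, 1) of n = k(k+1)/2 (for k ≥ 2), the minimal s with B^s(τ) = (k, k-1, ..., 2, 1) equals k(k-1). -/
/-- Toom's partition τ = (k-1, k-1, k-2, …, 2, 1, 1) of n = k(k+1)/2. -/
def tau (k : ℕ) : Multiset ℕ := (k - 1) ::ₘ 1 ::ₘ staircase (k - 1)

/-!
Record a configuration close to the staircase by its pile sizes `f 0, …, f k`, empty piles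
allowed. A Bulgarian solitaire move shifts this profile, `f i ↦ f (i + 1) - 1`, and puts the new
pile at position `k`. Hence if a single card has been moved from the pile of size `p` to the pile
of size `q`, one move just rotates `p` down by one in `[1, k]` and `q` down by one in `[0, k]`.
Since `τ` is the staircase with a card moved from the pile `k` to an empty pile, the donor and the
receiver run around cycles of lengths `k` and `k + 1`, and the staircase reappears exactly when the
receiver sits just below the donor; this first happens after `k (k - 1)` moves.
-/

open Multiset

lemma Multiset.range_add_one_eq_zero_cons (n : ℕ) :
    range (n + 1) = 0 ::ₘ (range n).map (· + 1) := by
  simp [Multiset.range, List.range_succ_eq_map]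

lemma Multiset.filter_pos_map_add_one (s : Multiset ℕ) :
    (s.map (· + 1)).filter (0 < ·) = s.map (· + 1) :=
  filter_eq_self.2 fun a ha => by obtain ⟨b, -, rfl⟩ := mem_map.1 ha; omega

lemma Multiset.filter_pos_map_sub_one_filter_pos (s : Multiset ℕ) :
    ((s.filter (0 < ·)).map (· - 1)).filter (0 < ·) = (s.map (· - 1)).filter (0 < ·) := by
  rw [filter_map, filter_map, filter_filter]
  congr 1
  exact filter_congr fun x _ => by simp only [Function.comp_apply]; omega

lemma Multiset.sum_map_sq_filter_pos (s : Multiset ℕ) :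
    ((s.filter (0 < ·)).map (· ^ 2)).sum = (s.map (· ^ 2)).sum := by
  induction s using Multiset.induction_on with
  | empty => rfl
  | cons a s ih =>
    by_cases ha : 0 < a
    · simp [filter_cons_of_pos _ ha, ih]
    · simp [ih, Nat.eq_zero_of_not_pos ha]

lemma staircase_eq_filter_pos_range (k : ℕ) :
    staircase k = (range (k + 1)).filter (0 < ·) := by
  rw [range_add_one_eq_zero_cons, filter_cons_of_neg _ (lt_irrefl 0), filter_pos_map_add_one,
    staircase]

def profile (k : ℕ) (f : ℕ → ℕ) : Multiset ℕ := ((range (k + 1)).map f).filter (0 < ·)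

lemma profile_congr {k : ℕ} {f g : ℕ → ℕ} (h : ∀ i ≤ k, f i = g i) :
    profile k f = profile k g := by
  rw [profile, profile, map_congr rfl fun i hi => h i (Nat.lt_succ_iff.1 (mem_range.1 hi))]

lemma bulg_profile (k : ℕ) (f : ℕ → ℕ) (h0 : f 0 ≤ 1) :
    bulg (profile k f) =
      profile k (fun i => if i < k then f (i + 1) - 1 else card (profile k f)) := by
  have hmap : (range (k + 1)).map (fun i => if i < k then f (i + 1) - 1 else card (profile k f))
      = card (profile k f) ::ₘ (range k).map (fun i => f (i + 1) - 1) := by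
    rw [range_succ, map_cons, if_neg (lt_irrefl k)]
    exact congrArg _ (map_congr rfl fun i hi => if_pos (mem_range.1 hi))
  conv_rhs => rw [profile, hmap]
  rw [bulg, filter_cons, filter_cons]
  congr 1
  rw [profile, filter_pos_map_sub_one_filter_pos, range_add_one_eq_zero_cons, map_cons, map_cons,
    filter_cons_of_neg _ (by omega), map_map, map_map]
  rfl

lemma card_profile_add_one (k : ℕ) (f : ℕ → ℕ) (hf : ∀ i, 2 ≤ i → 0 < f i) :
    card (profile (k + 1) f) = k + (if 0 < f 0 then 1 else 0) + (if 0 < f 1 then 1 else 0) := by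
  have hpos : ((range k).map (fun i => f (i + 1 + 1))).filter (0 < ·) =
      (range k).map (fun i => f (i + 1 + 1)) :=
    filter_eq_self.2 fun a ha => by
      obtain ⟨i, -, rfl⟩ := mem_map.1 ha
      exact hf _ (by omega)
  rw [profile, range_add_one_eq_zero_cons, range_add_one_eq_zero_cons, map_cons, map_map, map_cons,
    map_map]
  simp only [filter_cons, Function.comp_def, hpos]
  split_ifs <;> simp

/-- The staircase profile `i ↦ i` with a card moved from the pile of size `p` to the pile of
size `q`. -/
def transfer (p q i : ℕ) : ℕ := if i = p then i - 1 else if i = q then i + 1 else i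

lemma map_transfer_range {k p q : ℕ} (hpk : p ≤ k) (hqk : q ≤ k) (hpq : p ≠ q) :
    (range (k + 1)).map (transfer p q) =
      (p - 1) ::ₘ (q + 1) ::ₘ ((range (k + 1)).erase p).erase q := by
  have hp : p ∈ range (k + 1) := mem_range.2 (by omega)
  have hq : q ∈ (range (k + 1)).erase p :=
    (mem_erase_of_ne (Ne.symm hpq)).2 (mem_range.2 (by omega))
  conv_lhs => rw [← cons_erase hp, ← cons_erase hq]
  rw [map_cons, map_cons, transfer, if_pos rfl, transfer, if_neg (Ne.symm hpq), if_pos rfl]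
  congr 2
  refine (map_congr rfl fun i hi => ?_).trans (map_id' _)
  have hiq := ((nodup_range _).erase p |>.mem_erase_iff).1 hi
  have hip := ((nodup_range _).mem_erase_iff).1 hiq.2
  simp [transfer, hiq.1, hip.1]

lemma tau_eq_profile_transfer {k : ℕ} (hk : 2 ≤ k) : tau k = profile k (transfer k 0) := by
  obtain ⟨m, rfl⟩ : ∃ m, k = m + 1 := ⟨k - 1, by omega⟩
  rw [profile, map_transfer_range le_rfl (Nat.zero_le _) (by omega), range_succ, erase_cons_head,
    range_add_one_eq_zero_cons, erase_cons_head, filter_cons_of_pos _ (by omega),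
    filter_cons_of_pos _ (by omega), filter_pos_map_add_one]
  rfl

/-- Moving a card from a pile of size `p` to one of size `q` changes `∑ λᵢ²` by `2 (q + 1 - p)`,
so the staircase is recovered exactly when the card goes back. -/
lemma profile_transfer_eq_staircase_iff {k p q : ℕ} (hp : 1 ≤ p) (hpk : p ≤ k) (hqk : q ≤ k)
    (hpq : p ≠ q) : profile k (transfer p q) = staircase k ↔ p = q + 1 := by
  have hq : q ∈ (range (k + 1)).erase p :=
    (mem_erase_of_ne (Ne.symm hpq)).2 (mem_range.2 (by omega))
  have hrange : range (k + 1) = p ::ₘ q ::ₘ ((range (k + 1)).erase p).erase q := by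
    rw [cons_erase hq, cons_erase (mem_range.2 (by omega))]
  rw [profile, map_transfer_range hpk hqk hpq, staircase_eq_filter_pos_range]
  generalize ((range (k + 1)).erase p).erase q = R at hrange ⊢
  rw [hrange]
  obtain ⟨r, rfl⟩ : ∃ r, p = r + 1 := ⟨p - 1, by omega⟩
  rw [Nat.add_sub_cancel]
  constructor
  · intro h
    have hsq := congrArg (fun s => (s.map (· ^ 2)).sum) h
    simp only [sum_map_sq_filter_pos, map_cons, sum_cons] at hsq
    linarith
  · intro h
    obtain rfl : r = q := by omega
    rw [cons_swap]

lemma bulg_profile_transfer {k p q : ℕ} (hp : 1 ≤ p) (hpk : p ≤ k) (hqk : q ≤ k) (hpq : p ≠ q)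
    (hpq' : p ≠ q + 1) :
    bulg (profile k (transfer p q)) =
      profile k (transfer (if p = 1 then k else p - 1) (if q = 0 then k else q - 1)) := by
  rw [bulg_profile _ _ (by unfold transfer; split_ifs <;> omega)]
  refine profile_congr fun i hi => ?_
  obtain hik | rfl := hi.lt_or_eq
  · simp only [if_pos hik, transfer]
    split_ifs <;> omega
  · obtain ⟨m, rfl⟩ : ∃ m, i = m + 1 := ⟨i - 1, by omega⟩
    rw [if_neg (lt_irrefl _),
      card_profile_add_one _ _ fun j hj => by unfold transfer; split_ifs <;> omega]
    unfold transfer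
    split_ifs <;> omega

lemma Nat.add_one_mod_eq_ite {n : ℕ} (hn : 0 < n) (s : ℕ) :
    (s + 1) % n = if s % n + 1 = n then 0 else s % n + 1 := by
  rw [← Nat.mod_add_mod]
  split_ifs with h
  · rw [h, Nat.mod_self]
  · exact Nat.mod_eq_of_lt (by have := Nat.mod_lt s hn; omega)

/-- The size of the pile that lost a card after `s` moves from `tau k`. -/
def donor (k s : ℕ) : ℕ := k - s % k

/-- The size of the pile that gained a card after `s` moves from `tau k`. -/
def receiver (k s : ℕ) : ℕ := k - (s + k) % (k + 1)

lemma one_le_donor {k : ℕ} (hk : 0 < k) (s : ℕ) : 1 ≤ donor k s := by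
  have := Nat.mod_lt s hk
  unfold donor
  omega

lemma donor_le (k s : ℕ) : donor k s ≤ k := Nat.sub_le _ _

lemma receiver_le (k s : ℕ) : receiver k s ≤ k := Nat.sub_le _ _

lemma donor_add_one {k : ℕ} (hk : 0 < k) (s : ℕ) :
    donor k (s + 1) = if donor k s = 1 then k else donor k s - 1 := by
  have := Nat.mod_lt s hk
  unfold donor
  rw [Nat.add_one_mod_eq_ite hk]
  split_ifs <;> omega

lemma receiver_add_one (k s : ℕ) :
    receiver k (s + 1) = if receiver k s = 0 then k else receiver k s - 1 := by
  have := Nat.mod_lt (s + k) (show 0 < k + 1 by omega)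
  unfold receiver
  rw [Nat.add_right_comm, Nat.add_one_mod_eq_ite (show 0 < k + 1 by omega)]
  split_ifs <;> omega

lemma donor_ne_receiver_add {k s d : ℕ} (hs : s < k * (k - 1)) (hd : d ≤ 1) :
    donor k s ≠ receiver k s + d := by
  have hk : 0 < k := Nat.pos_of_ne_zero (by rintro rfl; simp at hs)
  have hj : s / k < k - 1 := (Nat.div_lt_iff_lt_mul hk).2 (by rwa [mul_comm])
  have ha := Nat.mod_add_div s k
  have hb := Nat.mod_add_div (s + k) (k + 1)
  have hak := Nat.mod_lt s hk
  have hbk := Nat.mod_lt (s + k) (show 0 < k + 1 by omega)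
  unfold donor receiver
  intro h
  -- after `j = s / k` full turns of the donor the receiver lags `j` behind
  have hcong : (k + 1) * ((s + k) / (k + 1)) + (d + s / k + 1) = (k + 1) * (s / k + 1) := by
    have : (s + k) % (k + 1) = s % k + d := by omega
    nlinarith
  have hdvd : k + 1 ∣ d + s / k + 1 :=
    (Nat.dvd_add_right (Dvd.intro _ rfl)).1 (hcong ▸ Dvd.intro _ rfl)
  have := Nat.le_of_dvd (Nat.succ_pos _) hdvd
  omega

lemma donor_mul_sub_one (k : ℕ) : donor k (k * (k - 1)) = k := by
  simp [donor, Nat.mul_mod_right]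

lemma receiver_mul_sub_one {k : ℕ} (hk : 2 ≤ k) : receiver k (k * (k - 1)) = k - 1 := by
  obtain ⟨m, rfl⟩ : ∃ m, k = m + 2 := ⟨k - 2, by omega⟩
  have : (m + 2) * (m + 2 - 1) + (m + 2) = 1 + (m + 2 + 1) * (m + 1) := by
    rw [show m + 2 - 1 = m + 1 by omega]; ring
  rw [receiver, this, Nat.add_mul_mod_self_left, Nat.mod_eq_of_lt (by omega)]

lemma iterate_bulg_tau {k s : ℕ} (hk : 2 ≤ k) (hs : s ≤ k * (k - 1)) :
    bulg^[s] (tau k) = profile k (transfer (donor k s) (receiver k s)) := by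
  induction s with
  | zero =>
    rw [Function.iterate_zero_apply, tau_eq_profile_transfer hk]
    simp [donor, receiver]
  | succ s ih =>
    have hs' : s < k * (k - 1) := by omega
    rw [Function.iterate_succ_apply', ih hs'.le,
      bulg_profile_transfer (one_le_donor (by omega) s) (donor_le k s) (receiver_le k s)
        (by simpa using donor_ne_receiver_add hs' (Nat.zero_le 1))
        (donor_ne_receiver_add hs' le_rfl),
      donor_add_one (by omega), receiver_add_one]

/-- Toom: the minimal number of moves needed to go from τ to the staircase
partition is exactly k(k-1). -/
theorem tau_min_moves (k : ℕ) (hk : 2 ≤ k) :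
    IsLeast {s : ℕ | bulg^[s] (tau k) = staircase k} (k * (k - 1)) := by
  refine ⟨?_, fun s hs => ?_⟩
  · show bulg^[k * (k - 1)] (tau k) = staircase k
    rw [iterate_bulg_tau hk le_rfl, donor_mul_sub_one, receiver_mul_sub_one hk,
      profile_transfer_eq_staircase_iff (by omega) le_rfl (by omega) (by omega)]
    omega
  · by_contra! hlt
    have hs : profile k (transfer (donor k s) (receiver k s)) = staircase k :=
      (iterate_bulg_tau hk hlt.le).symm.trans hs
    rw [profile_transfer_eq_staircase_iff (one_le_donor (by omega) s) (donor_le k s)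
      (receiver_le k s) (by simpa using donor_ne_receiver_add hlt (Nat.zero_le 1))] at hs
    exact donor_ne_receiver_add hlt le_rfl hs
end

section
/- The number of binary necklaces with r black beads and k - r white beads (cyclic sequences of length k up to rotation by the cyclic group of order k) equals (1/k) Σ_{d | gcd(r,k)} φ(d) · C(k/d, r/d). -/
/-- Rotation equivalence of binary colourings of a cycle of length k. -/
def NecklaceRel (k : ℕ) (f g : Fin k → Bool) : Prop :=
  ∃ c : Fin k, ∀ x : Fin k, f (x + c) = g x

/-!
Burnside's lemma for the rotation action of the cyclic group `G` of order `k`: the number of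
orbits times `k` is `∑ c, |Fix c|`. A colouring fixed by `c` is invariant under the subgroup
`⟨c⟩`, hence is a colouring of the `k / d` cosets of `⟨c⟩` (where `d` is the order of `c`),
each black coset contributing `d` black beads. So `|Fix c| = C(k/d, r/d)` if `d ∣ r` and `0`
otherwise, and it remains to note that `G` has exactly `φ d` elements of order `d` for `d ∣ k`.
-/

open Finset AddAction

theorem QuotientAddGroup.card_filter_comp_mk {G : Type*} [AddGroup G] [Fintype G]
    (H : AddSubgroup G) [Fintype (G ⧸ H)] (g : G ⧸ H → Bool) :
    #{x : G | g x = true} = Nat.card H * #{q | g q = true} := by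
  simp only [← Fintype.card_subtype, ← Nat.card_eq_fintype_card]
  exact (Nat.card_congr (preimageMkEquivAddSubgroupProdSet H {q | g q = true})).trans
    (Nat.card_prod _ _)

theorem IsAddCyclic.sum_comp_addOrderOf {G M : Type*} [AddGroup G] [IsAddCyclic G] [Fintype G]
    [AddCommMonoid M] (f : ℕ → M) :
    ∑ c : G, f (addOrderOf c) = ∑ d ∈ (Nat.card G).divisors, d.totient • f d := by
  classical
  rw [Nat.card_eq_fintype_card, ← sum_fiberwise_of_maps_to (t := (Fintype.card G).divisors)
    fun c _ => Nat.mem_divisors.2 ⟨addOrderOf_dvd_card, Fintype.card_ne_zero⟩]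
  refine sum_congr rfl fun d hd => ?_
  rw [sum_congr rfl fun c hc => congrArg f (mem_filter.1 hc).2, sum_const,
    IsAddCyclic.card_addOrderOf_eq_totient (Nat.dvd_of_mem_divisors hd)]

theorem Nat.sum_divisors_ite_dvd {M : Type*} [AddCommMonoid M] {n : ℕ} (hn : n ≠ 0) (r : ℕ)
    (f : ℕ → M) :
    ∑ d ∈ n.divisors, (if d ∣ r then f d else 0) = ∑ d ∈ (r.gcd n).divisors, f d := by
  rw [← sum_filter, ← Nat.divisors_filter_dvd_of_dvd hn (Nat.gcd_dvd_right r n)]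
  refine sum_congr (filter_congr fun d hd => ?_) fun _ _ => rfl
  exact ⟨fun h => Nat.dvd_gcd h (Nat.dvd_of_mem_divisors hd),
    fun h => h.trans (Nat.gcd_dvd_left r n)⟩

abbrev Colouring (α : Type*) [Fintype α] (r : ℕ) : Type _ :=
  {b : α → Bool // #{x | b x = true} = r}

namespace Colouring

def equivFinset (α : Type*) [Fintype α] [DecidableEq α] (r : ℕ) :
    Colouring α r ≃ {s : Finset α // s.card = r} where
  toFun b := ⟨({x | b.1 x = true} : Finset α), b.2⟩
  invFun s := ⟨fun x => decide (x ∈ s.1), by simpa using s.2⟩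
  left_inv b := by ext; simp
  right_inv s := by ext; simp

theorem card_eq_choose (α : Type*) [Fintype α] (r : ℕ) :
    Nat.card (Colouring α r) = (Nat.card α).choose r := by
  classical
  rw [Nat.card_congr (equivFinset α r), Nat.card_eq_fintype_card, Fintype.card_finset_len,
    Nat.card_eq_fintype_card]

variable {G : Type*} [AddGroup G] [Fintype G] {r : ℕ}

theorem card_filter_add_right (b : G → Bool) (c : G) :
    #{x | b (x + c) = true} = #{x | b x = true} :=
  card_equiv (Equiv.addRight c) (by simp)

instance : AddAction G (Colouring G r) where
  vadd c b := ⟨fun x => b.1 (x + c), (card_filter_add_right b.1 c).trans b.2⟩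
  zero_vadd b := Subtype.ext <| funext fun x => congrArg b.1 (add_zero x)
  add_vadd c d b := Subtype.ext <| funext fun x => congrArg b.1 (add_assoc x c d).symm

@[simp]
theorem vadd_apply (c : G) (b : Colouring G r) (x : G) : (c +ᵥ b).1 x = b.1 (x + c) := rfl

theorem orbitRel_iff (f g : Colouring G r) :
    orbitRel G (Colouring G r) f g ↔ ∃ c : G, ∀ x, f.1 (x + c) = g.1 x := by
  rw [Setoid.comm', orbitRel_apply, mem_orbit_iff]
  simp only [Subtype.ext_iff, funext_iff, vadd_apply]

def invariantEquiv (H : AddSubgroup G) [Fintype (G ⧸ H)] :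
    {b : Colouring G r // H ≤ stabilizer G b} ≃
      {g : G ⧸ H → Bool // Nat.card H * #{q | g q = true} = r} where
  toFun b := ⟨Quotient.lift b.1.1 fun x y hxy => by
      have hb := congrFun (congrArg Subtype.val
        (mem_stabilizer_iff.1 (b.2 (QuotientAddGroup.leftRel_apply.1 hxy)))) x
      simpa using hb.symm,
    by rw [← QuotientAddGroup.card_filter_comp_mk]; exact b.1.2⟩
  invFun g := ⟨⟨g.1 ∘ (↑), by
      rw [Function.comp_def, QuotientAddGroup.card_filter_comp_mk]; exact g.2⟩,
    fun h hh => Subtype.ext <| funext fun x =>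
      congrArg g.1 (QuotientAddGroup.mk_add_of_mem x hh)⟩
  left_inv _ := rfl
  right_inv g := Subtype.ext <| funext fun q => Quotient.inductionOn' q fun _ => rfl

theorem card_fixedBy (c : G) :
    Nat.card (fixedBy (Colouring G r) c) =
      if addOrderOf c ∣ r then (Nat.card G / addOrderOf c).choose (r / addOrderOf c) else 0 := by
  classical
  have hfix : ∀ b : Colouring G r,
      b ∈ fixedBy (Colouring G r) c ↔ AddSubgroup.zmultiples c ≤ stabilizer G b := fun b => by
    rw [mem_fixedBy, AddSubgroup.zmultiples_le, mem_stabilizer_iff]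
  rw [Nat.card_congr ((Equiv.subtypeEquivRight hfix).trans (invariantEquiv _)),
    Nat.card_zmultiples]
  split_ifs with hdvd
  · obtain ⟨m, rfl⟩ := hdvd
    have hpos := addOrderOf_pos c
    have hquot : Nat.card (G ⧸ AddSubgroup.zmultiples c) = Nat.card G / addOrderOf c := by
      rw [← (AddSubgroup.zmultiples c).card_mul_index, Nat.card_zmultiples,
        Nat.mul_div_cancel_left _ hpos, AddSubgroup.index_eq_card]
    simp only [Nat.mul_left_cancel_iff hpos, Nat.mul_div_cancel_left _ hpos]
    rw [card_eq_choose, hquot]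
  · simp only [Nat.card_eq_zero, isEmpty_subtype]
    exact Or.inl fun g hg => hdvd ⟨_, hg.symm⟩

theorem card_orbitRel_quotient_mul_card [IsAddCyclic G] (r : ℕ) :
    Nat.card (orbitRel.Quotient G (Colouring G r)) * Nat.card G =
      ∑ d ∈ (r.gcd (Nat.card G)).divisors, d.totient * (Nat.card G / d).choose (r / d) := by
  classical
  have burnside := sum_card_fixedBy_eq_card_orbits_mul_card_addGroup G (Colouring G r)
  simp only [← Nat.card_eq_fintype_card, card_fixedBy] at burnside
  rw [← burnside, IsAddCyclic.sum_comp_addOrderOf (fun d =>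
      if d ∣ r then (Nat.card G / d).choose (r / d) else 0),
    ← Nat.sum_divisors_ite_dvd Nat.card_pos.ne']
  simp only [smul_eq_mul, mul_ite, mul_zero]

end Colouring

theorem necklace_count_general (k r : ℕ) (hk : 0 < k) :
    Nat.card (Quot (fun f g : {b : Fin k → Bool //
        (Finset.univ.filter fun x => b x = true).card = r} =>
      NecklaceRel k f.1 g.1)) =
      (∑ d ∈ (Nat.gcd r k).divisors, Nat.totient d * Nat.choose (k / d) (r / d)) / k := by
  have : NeZero k := ⟨hk.ne'⟩
  have : IsAddCyclic (Fin k) :=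
    isAddCyclic_of_surjective (ZMod.finEquiv k).symm (ZMod.finEquiv k).symm.surjective
  have burnside := Colouring.card_orbitRel_quotient_mul_card (G := Fin k) r
  rw [Nat.card_fin] at burnside
  rw [← burnside, Nat.mul_div_cancel _ hk]
  exact Nat.card_congr (Quot.congrRight fun f g => (Colouring.orbitRel_iff f g).symm)

/-- The number of binary necklaces of length k with exactly r black beads
(colourings up to rotation by the cyclic group of order k) equals
(1/k) Σ_{d ∣ gcd(r,k)} φ(d)·C(k/d, r/d). -/
theorem necklace_count (k r : ℕ) (hk : 0 < k) (hrk : r ≤ k) :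
    Nat.card (Quot (fun f g : {b : Fin k → Bool //
        (Finset.univ.filter fun x => b x = true).card = r} =>
      NecklaceRel k f.1 g.1)) =
      (∑ d ∈ (Nat.gcd r k).divisors, Nat.totient d * Nat.choose (k / d) (r / d)) / k :=
  necklace_count_general k r hk
end

section
/- Every partition (λ₁, ..., λ_s) of n with s positive parts satisfying λ₁ ≥ s - 1 has a preimage under the Bulgarian solitaire operator B among partitions of n. -/
/-!
A part `c ≥ s - 1` of `λ` can serve as the pile that `B` creates: remove it, add one card to
each of the other `s - 1` parts, and add `c - (s - 1)` piles of size one. The new partition has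
`c` parts and the same total, and one move of Bulgarian solitaire turns it back into `λ`.
Taking `c = λ₁` proves the theorem.
-/

open Multiset

lemma bulg_map_succ_add_replicate_one (s : Multiset ℕ) (k : ℕ) :
    bulg (s.map (· + 1) + replicate k 1) = ((card s + k) ::ₘ s).filter (0 < ·) := by
  have h_zeros : (replicate k 0).filter (0 < ·) = 0 := filter_eq_nil.mpr (by simp [mem_replicate])
  simp [bulg, ← cons_add, filter_add, h_zeros]

lemma exists_bulg_eq_of_mem {n c : ℕ} {l : Multiset ℕ} (hl : IsPartition n l) (hc : c ∈ l)
    (h : card l - 1 ≤ c) : ∃ m, IsPartition n m ∧ bulg m = l := by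
  obtain ⟨hsum, hpos⟩ := hl
  set s := l.erase c
  have hl_eq : c ::ₘ s = l := cons_erase hc
  have hcard : card s = card l - 1 := card_erase_of_mem hc
  refine ⟨s.map (· + 1) + replicate (c - card s) 1, ⟨?_, ?_⟩, ?_⟩
  · rw [← hsum, ← hl_eq]
    simp only [sum_add, sum_map_add, map_id', map_const', sum_replicate, smul_eq_mul, mul_one,
      sum_cons]
    omega
  · simp only [mem_add, mem_map, mem_replicate]
    rintro x (⟨a, -, rfl⟩ | ⟨-, rfl⟩) <;> omega
  · rw [bulg_map_succ_add_replicate_one, Nat.add_sub_cancel' (hcard ▸ h), hl_eq,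
      filter_eq_self.mpr hpos]

/-- Every partition of n whose largest part is at least one less than its
number of parts has a preimage under the Bulgarian solitaire operator. -/
theorem has_preimage (n : ℕ) (l : Multiset ℕ) (hl : IsPartition n l)
    (h : Multiset.card l - 1 ≤ l.sup) :
    ∃ m : Multiset ℕ, IsPartition n m ∧ bulg m = l := by
  rcases eq_or_ne l 0 with rfl | hne
  · exact ⟨0, hl, rfl⟩
  obtain ⟨c, hc, hmax⟩ := exists_max_image id hne
  exact exists_bulg_eq_of_mem hl hc (h.trans (Multiset.sup_le.mpr hmax))
end

section
/- Let n = (k-1)k/2 + r with 0 < r ≤ k, and let λ be a partition of n lying on a cycle of the Bulgarian solitaire operator B. Then the cycle containing λ has length p dividing k, i.e., B^k(λ) = λ. -/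
namespace CycleAux

lemma sum_filter_pos (m : Multiset ℕ) : (m.filter (0 < ·)).sum = m.sum := by
  induction m using Multiset.induction with
  | empty => simp
  | cons a s ih =>
    by_cases h : 0 < a
    · simp [Multiset.filter_cons_of_pos _ h, ih]
    · have : a = 0 := by omega
      simp [Multiset.filter_cons_of_neg, h, ih, this]

lemma filter_map_pred (m : Multiset ℕ) :
    ((m.filter (0 < ·)).map (· - 1)).filter (0 < ·) = (m.map (· - 1)).filter (0 < ·) := by
  induction m using Multiset.induction with
  | empty => simp
  | cons a s ih =>
    by_cases h : 0 < a
    · by_cases h1 : 0 < a - 1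
      · simp [Multiset.filter_cons_of_pos _ h, Multiset.filter_cons_of_pos _ h1, ih]
      · simp [Multiset.filter_cons_of_pos _ h, Multiset.filter_cons_of_neg _ h1, ih]
    · have : a = 0 := by omega
      subst this
      simp [Multiset.filter_cons_of_neg, h, ih]

lemma card_le_sum (m : Multiset ℕ) (h : ∀ x ∈ m, 0 < x) : Multiset.card m ≤ m.sum := by
  induction m using Multiset.induction with
  | empty => simp
  | cons a s ih =>
    simp only [Multiset.card_cons, Multiset.sum_cons]
    have ha := h a (Multiset.mem_cons_self a s)
    have := ih (fun x hx => h x (Multiset.mem_cons_of_mem hx))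
    omega

lemma pred_sum (m : Multiset ℕ) (h : ∀ x ∈ m, 0 < x) :
    (m.map (· - 1)).sum + Multiset.card m = m.sum := by
  induction m using Multiset.induction with
  | empty => simp
  | cons a s ih =>
    simp only [Multiset.map_cons, Multiset.sum_cons, Multiset.card_cons]
    have ha := h a (Multiset.mem_cons_self a s)
    have := ih (fun x hx => h x (Multiset.mem_cons_of_mem hx))
    omega

lemma bulg_partition {n : ℕ} {l : Multiset ℕ} (hn : 1 ≤ n) (hl : IsPartition n l) :
    IsPartition n (bulg l) := by
  obtain ⟨hsum, hpos⟩ := hl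
  constructor
  · rw [bulg, sum_filter_pos, Multiset.sum_cons]
    have := pred_sum l hpos
    have hc := card_le_sum l hpos
    omega
  · intro x hx
    exact (Multiset.mem_filter.mp hx).2

lemma iterate_partition {n : ℕ} {l : Multiset ℕ} (hn : 1 ≤ n) (hl : IsPartition n l) :
    ∀ t, IsPartition n (bulg^[t] l) := by
  intro t
  induction t with
  | zero => simpa
  | succ t ih =>
    rw [Function.iterate_succ_apply']
    exact bulg_partition hn ih

end CycleAux

namespace CycleAux

variable {n : ℕ} {l : Multiset ℕ}

/-- number of piles at time t -/
def cs (l : Multiset ℕ) (t : ℕ) : ℕ := Multiset.card (bulg^[t] l)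

lemma cs_pos (hn : 1 ≤ n) (hl : IsPartition n l) (t : ℕ) : 1 ≤ cs l t := by
  rcases iterate_partition hn hl t with ⟨hs, _⟩
  by_contra h
  have : cs l t = 0 := by omega
  rw [cs] at this
  rw [Multiset.card_eq_zero.mp this] at hs
  simp at hs
  omega

lemma cs_le (hn : 1 ≤ n) (hl : IsPartition n l) (t : ℕ) : cs l t ≤ n := by
  rcases iterate_partition hn hl t with ⟨hs, hpos⟩
  rw [cs, ← hs]
  exact card_le_sum _ hpos

lemma rep (hn : 1 ≤ n) (hl : IsPartition n l) :
    ∀ T, bulg^[T] l =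
      ((l.map (· - T)) + (Multiset.range T).map (fun j => cs l j - (T - 1 - j))).filter (0 < ·) := by
  intro T
  induction T with
  | zero =>
    simp only [Function.iterate_zero_apply, Multiset.range_zero, Multiset.map_zero, add_zero]
    rw [show (fun x : ℕ => x - 0) = id by funext x; simp, Multiset.map_id]
    exact (Multiset.filter_eq_self.mpr hl.2).symm
  | succ T ih =>
    rw [Function.iterate_succ_apply', bulg]
    have hpos : 0 < cs l T := cs_pos hn hl T
    rw [show Multiset.card (bulg^[T] l) = cs l T from rfl]
    rw [Multiset.filter_cons_of_pos _ hpos]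
    rw [ih, filter_map_pred, Multiset.map_add, Multiset.map_map, Multiset.map_map]
    have e1 : (l.map ((· - 1) ∘ (· - T))) = l.map (· - (T+1)) :=
      Multiset.map_congr rfl (fun x _ => by simp; omega)
    have e2 : (Multiset.range T).map ((· - 1) ∘ (fun j => cs l j - (T - 1 - j)))
        = (Multiset.range T).map (fun j => cs l j - (T + 1 - 1 - j)) := by
      refine Multiset.map_congr rfl (fun j hj => ?_)
      have : j < T := Multiset.mem_range.mp hj
      simp only [Function.comp]
      omega
    rw [e2, e1]
    -- RHS
    have hr : Multiset.range (T+1) = T ::ₘ Multiset.range T := Multiset.range_succ T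
    rw [hr, Multiset.map_cons]
    have : cs l T - (T + 1 - 1 - T) = cs l T := by omega
    rw [this]
    rw [show (l.map (· - (T+1)) + (cs l T ::ₘ (Multiset.range T).map (fun j => cs l j - (T + 1 - 1 - j))))
        = cs l T ::ₘ (l.map (· - (T+1)) + (Multiset.range T).map (fun j => cs l j - (T + 1 - 1 - j))) by
      rw [Multiset.add_cons]  ]
    rw [Multiset.filter_cons_of_pos _ hpos]

end CycleAux

namespace CycleAux

variable {n p : ℕ} {l : Multiset ℕ}

lemma cs_per (hcyc : bulg^[p] l = l) (t : ℕ) : cs l (t + p) = cs l t := by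
  unfold cs
  rw [Function.iterate_add_apply, hcyc]

lemma parts_le (hl : IsPartition n l) {x : ℕ} (hx : x ∈ l) : x ≤ n := by
  have := Multiset.single_le_sum (s := l) (fun y _ => Nat.zero_le y) x hx
  have h2 := hl.1
  omega

lemma zeros_part (hl : IsPartition n l) {t : ℕ} (ht : n ≤ t) :
    ∀ x ∈ l.map (· - t), ¬ (0 < x) := by
  intro x hx
  obtain ⟨y, hy, rfl⟩ := Multiset.mem_map.mp hx
  have := parts_le hl hy
  omega

lemma rep' (hn : 1 ≤ n) (hl : IsPartition n l) {t : ℕ} (ht : n ≤ t) :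
    bulg^[t] l = ((Multiset.range t).map (fun j => cs l j - (t - 1 - j))).filter (0 < ·) := by
  rw [rep hn hl t, Multiset.filter_add,
    Multiset.filter_eq_nil.mpr (zeros_part hl ht), zero_add]

lemma cs_card (hn : 1 ≤ n) (hl : IsPartition n l) {t : ℕ} (ht : n ≤ t) :
    cs l t = ((Finset.range t).filter (fun j => t ≤ cs l j + j)).card := by
  rw [cs, rep' hn hl ht]
  rw [← Multiset.countP_eq_card_filter, Multiset.countP_map]
  have : (Finset.filter (fun j => t ≤ cs l j + j) (Finset.range t)).card
      = Multiset.card (Multiset.filter (fun j => t ≤ cs l j + j) (Multiset.range t)) := by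
    rfl
  rw [this]
  congr 1
  refine Multiset.filter_congr (fun j hj => ?_)
  have : j < t := Multiset.mem_range.mp hj
  constructor <;> intro <;> omega

lemma cs_sum (hn : 1 ≤ n) (hl : IsPartition n l) {t : ℕ} (ht : n ≤ t) :
    n = ∑ j ∈ Finset.range t, (cs l j - (t - 1 - j)) := by
  have h1 : (bulg^[t] l).sum = n := (iterate_partition hn hl t).1
  rw [rep' hn hl ht, sum_filter_pos] at h1
  rw [← h1]
  rfl

end CycleAux

namespace CycleAux

structure Sys (c : ℕ → ℕ) (n p : ℕ) : Prop where
  hn : 1 ≤ n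
  hp : 1 ≤ p
  per : ∀ t, c (t + p) = c t
  cle : ∀ t, c t ≤ n
  cpos : ∀ t, 1 ≤ c t
  card : ∀ t, n ≤ t → c t = ((Finset.range t).filter (fun j => t ≤ c j + j)).card
  sum : ∀ t, n ≤ t → n = ∑ j ∈ Finset.range t, (c j - (t - 1 - j))

namespace Sys

variable {c : ℕ → ℕ} {n p : ℕ}

lemma per_mul (S : Sys c n p) (K t : ℕ) : c (t + K * p) = c t := by
  induction K with
  | zero => simp
  | succ K ih =>
    have : t + (K + 1) * p = (t + K * p) + p := by ring
    rw [this, S.per, ih]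

lemma alive_sub (S : Sys c n p) {M t : ℕ} (hM : ∀ s, n ≤ s → c s ≤ M) (ht : 2 * n ≤ t) :
    (Finset.range t).filter (fun j => t ≤ c j + j) ⊆ Finset.Ico (t - M) t := by
  intro j hj
  rw [Finset.mem_filter, Finset.mem_range] at hj
  obtain ⟨hjt, hcj⟩ := hj
  rw [Finset.mem_Ico]
  refine ⟨?_, hjt⟩
  by_contra hcon
  push_neg at hcon
  by_cases hjn : j < n
  · have := S.cle j
    omega
  · have := hM j (by omega)
    omega

lemma alive_sup (S : Sys c n p) {m t : ℕ} (hm : ∀ s, n ≤ s → m ≤ c s) (ht : n + m ≤ t) :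
    Finset.Ico (t - m) t ⊆ (Finset.range t).filter (fun j => t ≤ c j + j) := by
  intro j hj
  rw [Finset.mem_Ico] at hj
  rw [Finset.mem_filter, Finset.mem_range]
  have := hm j (by omega)
  exact ⟨hj.2, by omega⟩

lemma max_prop (S : Sys c n p) {M t : ℕ} (hM : ∀ s, n ≤ s → c s ≤ M)
    (ht : 2 * n ≤ t) (h : c (t + M) = M) : c t = M := by
  have hM1 : 1 ≤ M := le_trans (S.cpos n) (hM n le_rfl)
  have hcard := S.card (t + M) (by omega)
  rw [h] at hcard
  have hsub := S.alive_sub hM (t := t + M) (by omega)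
  rw [show t + M - M = t by omega] at hsub
  have hicocard : (Finset.Ico t (t + M)).card = M := by
    rw [Nat.card_Ico]; omega
  have heq := Finset.eq_of_subset_of_card_le hsub (by omega)
  have htmem : t ∈ (Finset.range (t + M)).filter (fun j => t + M ≤ c j + j) := by
    rw [heq]
    rw [Finset.mem_Ico]
    omega
  rw [Finset.mem_filter] at htmem
  have := hM t (by omega)
  omega

lemma min_dead (S : Sys c n p) {m u : ℕ} (hm : ∀ s, n ≤ s → m ≤ c s)
    (hu : n + m ≤ u) (h : c u = m) : ∀ j, j < u - m → c j + j < u := by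
  intro j hj
  have hcard := S.card u (by omega)
  rw [h] at hcard
  have hsup := S.alive_sup hm (t := u) (by omega)
  have hicocard : (Finset.Ico (u - m) u).card = m := by
    rw [Nat.card_Ico]; omega
  have heq := Finset.eq_of_subset_of_card_le hsup (by omega)
  have : j ∉ (Finset.range u).filter (fun i => u ≤ c i + i) := by
    rw [← heq, Finset.mem_Ico]
    omega
  rw [Finset.mem_filter, Finset.mem_range] at this
  push_neg at this
  by_cases hju : j < u
  · exact this hju
  · omega

lemma min_prop (S : Sys c n p) {m u : ℕ} (hm : ∀ s, n ≤ s → m ≤ c s)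
    (hu : n + m + 1 ≤ u) (h : c u = m) : c (u - (m + 1)) = m := by
  have hd := S.min_dead hm (by omega) h (u - (m+1)) (by omega)
  have h1 : c (u - (m+1)) ≤ m := by omega
  have h2 := hm (u - (m+1)) (by omega)
  omega

lemma max_reach (S : Sys c n p) {M : ℕ} (hM : ∀ s, n ≤ s → c s ≤ M) :
    ∀ J t, c t = M → 2 * n + J * M ≤ t → c (t - J * M) = M := by
  intro J
  induction J with
  | zero => intro t h _; simpa using h
  | succ J ih =>
    intro t h hb
    have hab : (J + 1) * M = J * M + M := Nat.succ_mul J M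
    have hih := ih t h (by omega)
    have := S.max_prop hM (t := t - (J+1) * M)
      (by omega)
      (by rw [show t - (J+1) * M + M = t - J * M by omega]; exact hih)
    exact this

lemma min_reach (S : Sys c n p) {m : ℕ} (hm : ∀ s, n ≤ s → m ≤ c s) :
    ∀ J u, c u = m → n + 1 + J * (m + 1) ≤ u → c (u - J * (m + 1)) = m := by
  intro J
  induction J with
  | zero => intro u h _; simpa using h
  | succ J ih =>
    intro u h hb
    have hab : (J + 1) * (m + 1) = J * (m + 1) + (m + 1) := Nat.succ_mul J (m + 1)
    have hih := ih u h (by omega)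
    have := S.min_prop hm (u := u - J * (m+1))
      (by omega)
      hih
    rw [show u - J * (m+1) - (m+1) = u - (J+1) * (m+1) by omega] at this
    exact this

end Sys
end CycleAux

namespace CycleAux


lemma exists_step (p a Δ : ℕ) (hp : 1 ≤ p) (hdvd : Nat.gcd p a ∣ Δ) :
    ∃ j K : ℕ, Δ + j * a = K * p := by
  obtain ⟨m, hm⟩ := hdvd
  have hbez := Nat.gcd_eq_gcd_ab p a
  set A : ℤ := Nat.gcdA p a with hA
  set B : ℤ := Nat.gcdB p a with hB
  have hpz : (p : ℤ) ≠ 0 := by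
    have : 0 < p := hp
    exact_mod_cast this.ne'
  set jz : ℤ := (-(m * B)) % p with hjz
  have hjz0 : 0 ≤ jz := Int.emod_nonneg _ hpz
  set j : ℕ := jz.toNat with hj
  have hjc : (j : ℤ) = jz := Int.toNat_of_nonneg hjz0
  have hpd : (p : ℤ) ∣ ((m : ℤ) * B + j) := by
    rw [hjc, hjz, Int.emod_def]
    exact ⟨-((-(m*B))/p), by ring⟩
  have key : (p : ℤ) ∣ ((Δ : ℤ) + j * a) := by
    have hΔ : (Δ : ℤ) = ((p : ℤ) * A + a * B) * m := by
      rw [← hbez]; exact_mod_cast congrArg (Nat.cast : ℕ → ℤ) hm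
    obtain ⟨q, hq⟩ := hpd
    refine ⟨A * m + a * q, ?_⟩
    rw [hΔ]
    have : (j : ℤ) = p * q - m * B := by linarith
    rw [this]; ring
  have keyn : p ∣ (Δ + j * a) := by
    have : ((Δ + j * a : ℕ) : ℤ) = (Δ : ℤ) + j * a := by push_cast; ring
    exact_mod_cast (by rw [this]; exact key : (p:ℤ) ∣ ((Δ + j*a : ℕ) : ℤ))
  obtain ⟨K, hK⟩ := keyn
  exact ⟨j, K, by rw [hK, Nat.mul_comm]⟩

namespace Sys

variable {c : ℕ → ℕ} {n p : ℕ}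

lemma max_mod (S : Sys c n p) {M t₀ : ℕ} (hM : ∀ s, n ≤ s → c s ≤ M) (ht₀ : c t₀ = M) :
    ∀ t, 2 * n + t₀ ≤ t → t ≡ t₀ [MOD Nat.gcd p M] → c t = M := by
  intro t hb hmod
  have hdvd : Nat.gcd p M ∣ t - t₀ := (Nat.modEq_iff_dvd' (by omega)).mp hmod.symm
  obtain ⟨j, K, hjK⟩ := exists_step p M (t - t₀) S.hp hdvd
  set x := j * M with hx
  set y := K * p with hy
  have h2 : c (t + x) = M := by
    rw [show t + x = t₀ + K * p by omega, S.per_mul]; exact ht₀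
  have h3 := S.max_reach hM j (t + x) h2 (by omega)
  rwa [show t + x - x = t by omega] at h3

lemma min_mod (S : Sys c n p) {m u₀ : ℕ} (hm : ∀ s, n ≤ s → m ≤ c s) (hu₀ : c u₀ = m) :
    ∀ u, 2 * n + u₀ ≤ u → u ≡ u₀ [MOD Nat.gcd p (m + 1)] → c u = m := by
  intro u hb hmod
  have hn := S.hn
  have hdvd : Nat.gcd p (m + 1) ∣ u - u₀ := (Nat.modEq_iff_dvd' (by omega)).mp hmod.symm
  obtain ⟨j, K, hjK⟩ := exists_step p (m + 1) (u - u₀) S.hp hdvd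
  set x := j * (m + 1) with hx
  set y := K * p with hy
  have h2 : c (u + x) = m := by
    rw [show u + x = u₀ + K * p by omega, S.per_mul]; exact hu₀
  have h3 := S.min_reach hm j (u + x) h2 (by omega)
  rwa [show u + x - x = u by omega] at h3

end Sys
end CycleAux

namespace CycleAux
namespace Sys

variable {c : ℕ → ℕ} {n p : ℕ}

theorem no_gap (S : Sys c n p) {M m t₀ u₀ : ℕ}
    (hM : ∀ s, n ≤ s → c s ≤ M) (hm : ∀ s, n ≤ s → m ≤ c s)
    (ht₀ : c t₀ = M) (hu₀ : c u₀ = m) : M ≤ m + 1 := by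
  by_contra hcon
  push_neg at hcon
  set g := Nat.gcd p M with hgdef
  set h := Nat.gcd p (m + 1) with hhdef
  set d := Nat.gcd g h with hddef
  have hp1 : 1 ≤ p := S.hp
  have hg1 : 1 ≤ g := Nat.gcd_pos_of_pos_left _ hp1
  have hh1 : 1 ≤ h := Nat.gcd_pos_of_pos_left _ hp1
  have hd1 : 1 ≤ d := Nat.gcd_pos_of_pos_left _ hg1
  have hdM : d ∣ M := dvd_trans (Nat.gcd_dvd_left g h) (Nat.gcd_dvd_right p M)
  have hdm1 : d ∣ (m + 1) := dvd_trans (Nat.gcd_dvd_right g h) (Nat.gcd_dvd_right p (m + 1))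
  have hdE : d ∣ (M - (m + 1)) := Nat.dvd_sub hdM hdm1
  have hdle : d ≤ M - (m + 1) := Nat.le_of_dvd (by omega) hdE
  set v := m + 2 + (u₀ + (d - 1) * (t₀ + (m + 2))) % d with hv
  have hv1 : m + 2 ≤ v := by omega
  have hv2 : v ≤ M := by
    have := Nat.mod_lt (u₀ + (d - 1) * (t₀ + (m + 2))) (show 0 < d by omega)
    omega
  have hcons : t₀ + v ≡ u₀ [MOD d] := by
    have e2 : (t₀ + (m + 2)) + (u₀ + (d - 1) * (t₀ + (m + 2))) = u₀ + d * (t₀ + (m + 2)) := by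
      set X := t₀ + (m + 2) with hX
      have : d * X = (d - 1) * X + X := by
        nth_rewrite 1 [show d = (d - 1) + 1 by omega]; rw [Nat.succ_mul]
      omega
    calc t₀ + v = (t₀ + (m + 2)) + (u₀ + (d - 1) * (t₀ + (m + 2))) % d := by omega
      _ ≡ (t₀ + (m + 2)) + (u₀ + (d - 1) * (t₀ + (m + 2))) [MOD d] :=
          Nat.ModEq.add_left _ (Nat.mod_modEq _ d)
      _ = u₀ + d * (t₀ + (m + 2)) := e2
      _ ≡ u₀ + 0 [MOD d] :=
          Nat.ModEq.add_left _ (Nat.modEq_zero_iff_dvd.mpr ⟨_, rfl⟩)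
      _ = u₀ := by omega
  obtain ⟨w, hw1, hw2⟩ := Nat.chineseRemainder' (n := g) (m := h) hcons
  set L := Nat.lcm g h with hL
  have hL1 : 1 ≤ L := Nat.lcm_pos hg1 hh1
  set j0 := 2 * n + t₀ + u₀ + v + p + 1 with hj0
  have hjL : j0 ≤ j0 * L := Nat.le_mul_of_pos_right _ hL1
  set u := w + j0 * L with hu
  have huu : u ≡ u₀ [MOD h] := by
    have hz : j0 * L ≡ 0 [MOD h] :=
      Nat.modEq_zero_iff_dvd.mpr (Dvd.dvd.mul_left (Nat.dvd_lcm_right g h) j0)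
    calc u = w + j0 * L := rfl
      _ ≡ u₀ + 0 [MOD h] := Nat.ModEq.add hw2 hz
      _ = u₀ := by omega
  set τ := u - v with hτ
  have hτv : τ + v = u := by omega
  have hτmod : τ ≡ t₀ [MOD g] := by
    have hz : j0 * L ≡ 0 [MOD g] :=
      Nat.modEq_zero_iff_dvd.mpr (Dvd.dvd.mul_left (Nat.dvd_lcm_left g h) j0)
    have h1 : τ + v ≡ t₀ + v [MOD g] := by
      calc τ + v = w + j0 * L := by omega
        _ ≡ (t₀ + v) + 0 [MOD g] := Nat.ModEq.add hw1 hz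
        _ = t₀ + v := by omega
    exact Nat.ModEq.add_right_cancel' v h1
  have hcτ : c τ = M := S.max_mod hM ht₀ τ (by omega) hτmod
  have hcu : c u = m := S.min_mod hm hu₀ u (by omega) huu
  have hdead := S.min_dead hm (u := u) (by omega) hcu τ (by omega)
  omega

end Sys
end CycleAux

namespace CycleAux
namespace Sys

variable {c : ℕ → ℕ} {n p : ℕ}

lemma step_period (S : Sys c n p) {m : ℕ}
    (hM : ∀ s, n ≤ s → c s ≤ m + 1) (hm : ∀ s, n ≤ s → m ≤ c s) :
    ∀ t, 2 * n ≤ t → c (t + (m + 1)) = c t := by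
  intro t ht
  set M := m + 1 with hMdef
  have hn1 : 1 ≤ n := S.hn
  have hcard := S.card (t + M) (by omega)
  set A := (Finset.range (t + M)).filter (fun j => t + M ≤ c j + j) with hA
  have hsub : A ⊆ Finset.Ico t (t + M) := by
    have := S.alive_sub hM (t := t + M) (by omega)
    rwa [show t + M - M = t by omega] at this
  have hsup : Finset.Ico (t + 1) (t + M) ⊆ A := by
    have := S.alive_sup hm (t := t + M) (by omega)
    rwa [show t + M - m = t + 1 by omega] at this
  by_cases hc : c t = M
  · have : Finset.Ico t (t + M) ⊆ A := by
      intro x hx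
      rw [Finset.mem_Ico] at hx
      by_cases hxt : x = t
      · subst hxt
        rw [hA, Finset.mem_filter, Finset.mem_range]
        exact ⟨by omega, by omega⟩
      · exact hsup (by rw [Finset.mem_Ico]; omega)
    have heq := Finset.Subset.antisymm hsub this
    rw [heq, Nat.card_Ico] at hcard
    omega
  · have hct : c t = m := by
      have h1 := hm t (by omega); have h2 := hM t (by omega); omega
    have htA : t ∉ A := by
      rw [hA, Finset.mem_filter]
      push_neg
      intro _
      omega
    have heq : A = Finset.Ico (t + 1) (t + M) := by
      apply Finset.Subset.antisymm
      · intro x hx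
        have hx2 := hsub hx
        rw [Finset.mem_Ico] at hx2 ⊢
        have hxt : x ≠ t := by rintro rfl; exact htA hx
        omega
      · exact hsup
    rw [heq, Nat.card_Ico] at hcard
    omega

lemma ident_k (S : Sys c n p) {m t₀ : ℕ}
    (hM : ∀ s, n ≤ s → c s ≤ m + 1) (hm : ∀ s, n ≤ s → m ≤ c s)
    (ht₀ : n ≤ t₀) (hct₀ : c t₀ = m + 1)
    {k r : ℕ} (hr : 0 < r) (hrk : r ≤ k) (hnk : n = (k - 1) * k / 2 + r) : k = m + 1 := by
  set M := m + 1 with hMdef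
  have hn1 : 1 ≤ n := S.hn
  have hMn : M ≤ n := by rw [← hct₀]; exact S.cle t₀
  set T₁ := t₀ + (2 * n + 2) * p with hT₁
  have hcT₁ : c T₁ = M := by rw [hT₁, S.per_mul]; exact hct₀
  set t := T₁ + 1 with ht
  have hT₁big : 3 * n + 2 ≤ T₁ := by
    have : 2 * n + 2 ≤ (2 * n + 2) * p := Nat.le_mul_of_pos_right _ S.hp
    omega
  have hsum := S.sum t (by omega)
  have hwin : (n : ℕ) = ∑ j ∈ Finset.Ico (t - M) t, (c j - (t - 1 - j)) := by
    rw [hsum]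
    refine (Finset.sum_subset (fun x hx => by
      rw [Finset.mem_Ico] at hx; rw [Finset.mem_range]; omega) ?_).symm
    intro x hx hnx
    rw [Finset.mem_range] at hx
    rw [Finset.mem_Ico] at hnx
    push_neg at hnx
    by_cases hxn : x < n
    · have := S.cle x
      omega
    · have := hM x (by omega)
      omega
  have hrei : ∑ j ∈ Finset.Ico (t - M) t, (c j - (t - 1 - j))
      = ∑ a ∈ Finset.range M, (c (t - 1 - a) - a) := by
    rw [Finset.sum_Ico_eq_sum_range]
    rw [show t - (t - M) = M by omega]
    rw [← Finset.sum_range_reflect (fun a => c (t - 1 - a) - a) M]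
    apply Finset.sum_congr rfl
    intro i hi
    rw [Finset.mem_range] at hi
    have e1 : t - M + i = t - 1 - (M - 1 - i) := by omega
    have e2 : t - 1 - (t - M + i) = M - 1 - i := by omega
    rw [e2, e1]
  have hLB : M + ∑ a ∈ Finset.range m, a ≤ n := by
    rw [hwin, hrei]
    rw [show (Finset.range M) = Finset.range (m + 1) from rfl]
    rw [Finset.sum_range_succ' (fun a => c (t - 1 - a) - a) m]
    have hterm0 : c (t - 1 - 0) - 0 = M := by
      rw [show t - 1 - 0 = T₁ by omega]
      omega
    have h1 : ∑ a ∈ Finset.range m, (m - 1 - a) ≤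
        ∑ a ∈ Finset.range m, (c (t - 1 - (a + 1)) - (a + 1)) := by
      apply Finset.sum_le_sum
      intro a ha
      rw [Finset.mem_range] at ha
      have := hm (t - 1 - (a + 1)) (by omega)
      omega
    have h2 : ∑ a ∈ Finset.range m, (m - 1 - a) = ∑ a ∈ Finset.range m, a :=
      Finset.sum_range_reflect (fun a => a) m
    omega
  have hUB : n ≤ (∑ a ∈ Finset.range M, a) + M := by
    rw [hwin, hrei]
    have h1 : ∑ a ∈ Finset.range M, (c (t - 1 - a) - a) ≤
        ∑ a ∈ Finset.range M, (M - a) := by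
      apply Finset.sum_le_sum
      intro a ha
      rw [Finset.mem_range] at ha
      have := hM (t - 1 - a) (by omega)
      omega
    have h2 : ∑ a ∈ Finset.range M, (M - a) = ∑ a ∈ Finset.range M, (a + 1) := by
      rw [← Finset.sum_range_reflect (fun a => a + 1) M]
      apply Finset.sum_congr rfl
      intro i hi
      rw [Finset.mem_range] at hi
      omega
    have h3 : ∑ a ∈ Finset.range M, (a + 1) = (∑ a ∈ Finset.range M, a) + M := by
      rw [Finset.sum_add_distrib]
      simp
    omega
  have hg1 : (∑ a ∈ Finset.range m, a) * 2 = m * (m - 1) := Finset.sum_range_id_mul_two m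
  have hg2 : (∑ a ∈ Finset.range M, a) * 2 = M * (M - 1) := Finset.sum_range_id_mul_two M
  have hk1 : 1 ≤ k := by omega
  obtain ⟨k', rfl⟩ : ∃ k', k = k' + 1 := ⟨k - 1, by omega⟩
  have heven : ∃ e, (k' + 1 - 1) * (k' + 1) = 2 * e ∧ (k' + 1 - 1) * (k' + 1) / 2 = e := by
    obtain ⟨e, he⟩ := Nat.even_mul_succ_self k'
    exact ⟨e, by simp; omega, by simp; omega⟩
  obtain ⟨e, he1, he2⟩ := heven
  have h2n : 2 * n = k' * (k' + 1) + 2 * r := by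
    rw [hnk, he2]
    simp at he1
    omega
  have hMm : M * (M - 1) = (m + 1) * m := by rw [hMdef, Nat.add_sub_cancel]
  have hmm : m * (m - 1) + 2 * m = m * (m + 1) := by
    cases m with
    | zero => simp
    | succ m' =>
      have h : m' + 1 - 1 = m' := rfl
      rw [h]
      ring
  by_contra hk
  rcases Nat.lt_or_ge (k' + 1) (m + 1) with hlt | hge
  · have hq : (k' + 1) * (k' + 2) ≤ m * (m + 1) := Nat.mul_le_mul (by omega) (by omega)
    have hid : (k' + 1) * (k' + 2) = k' * (k' + 1) + 2 * (k' + 1) := by ring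
    omega
  · have hge2 : m + 2 ≤ k' + 1 := by omega
    have hq : (m + 1) * (m + 2) ≤ k' * (k' + 1) := Nat.mul_le_mul (by omega) (by omega)
    have hid : (m + 1) * (m + 2) = (m + 1) * m + 2 * (m + 1) := by ring
    omega

end Sys
end CycleAux

namespace CycleAux
namespace Sys

variable {c : ℕ → ℕ} {n p : ℕ}

theorem period (S : Sys c n p) {k r : ℕ} (hr : 0 < r) (hrk : r ≤ k)
    (hnk : n = (k - 1) * k / 2 + r) : ∀ t, 2 * n ≤ t → c (t + k) = c t := by
  have hp1 : 1 ≤ p := S.hp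
  have hn1 : 1 ≤ n := S.hn
  have hne : (Finset.Ico n (n + p)).Nonempty := by
    rw [Finset.nonempty_Ico]; omega
  obtain ⟨t₀, ht₀mem, ht₀max⟩ := Finset.exists_max_image (Finset.Ico n (n + p)) c hne
  obtain ⟨u₀, hu₀mem, hu₀min⟩ := Finset.exists_min_image (Finset.Ico n (n + p)) c hne
  rw [Finset.mem_Ico] at ht₀mem hu₀mem
  set M := c t₀ with hMdef
  set m := c u₀ with hmdef
  have hbound : ∀ t, n ≤ t → m ≤ c t ∧ c t ≤ M := by
    intro t htn
    have hmod := Nat.mod_add_div' (t - n) p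
    have key : c t = c (n + (t - n) % p) := by
      have h1 : n + (t - n) % p + ((t - n) / p) * p = t := by omega
      have k2 := S.per_mul ((t - n) / p) (n + (t - n) % p)
      rw [h1] at k2
      exact k2
    have hsm : n + (t - n) % p ∈ Finset.Ico n (n + p) := by
      rw [Finset.mem_Ico]
      have := Nat.mod_lt (t - n) (show 0 < p from hp1)
      omega
    exact ⟨by rw [key]; exact hu₀min _ hsm, by rw [key]; exact ht₀max _ hsm⟩
  have hMb : ∀ s, n ≤ s → c s ≤ M := fun s hs => (hbound s hs).2
  have hmb : ∀ s, n ≤ s → m ≤ c s := fun s hs => (hbound s hs).1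
  have hng := S.no_gap hMb hmb (rfl : c t₀ = M) (rfl : c u₀ = m)
  have hmM : m ≤ M := hbound t₀ (by omega) |>.1
  rcases Nat.eq_or_lt_of_le hmM with heq | hlt
  · intro t ht
    have h1 := hbound t (by omega)
    have h2 := hbound (t + k) (by omega)
    omega
  · have hM1 : M = m + 1 := by omega
    have hMb' : ∀ s, n ≤ s → c s ≤ m + 1 := by intro s hs; have := hMb s hs; omega
    have hkM : k = m + 1 :=
      S.ident_k hMb' hmb (t₀ := t₀) (by omega) (by omega) hr hrk hnk
    intro t ht
    have := S.step_period hMb' hmb t ht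
    rw [hkM]
    exact this

end Sys
end CycleAux

namespace CycleAux

variable {n p : ℕ} {l : Multiset ℕ}

lemma mkSys (hn : 1 ≤ n) (hl : IsPartition n l) (hp : 1 ≤ p) (hcyc : bulg^[p] l = l) :
    Sys (cs l) n p :=
  ⟨hn, hp, cs_per hcyc, cs_le hn hl, cs_pos hn hl,
    fun _ ht => cs_card hn hl ht, fun _ ht => cs_sum hn hl ht⟩

lemma cycle_mul (hcyc : bulg^[p] l = l) : ∀ m, bulg^[m * p] l = l := by
  intro m
  induction m with
  | zero => simp
  | succ m ih =>
    have : (m + 1) * p = m * p + p := Nat.succ_mul m p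
    rw [this, Function.iterate_add_apply, hcyc, ih]

theorem main_concrete (k r : ℕ) (hr : 0 < r) (hrk : r ≤ k)
    (hnk : n = (k - 1) * k / 2 + r)
    (hl : IsPartition n l) (hp1 : 1 ≤ p) (hcyc : bulg^[p] l = l) :
    bulg^[k] l = l := by
  have hn1 : 1 ≤ n := by omega
  have S := mkSys hn1 hl hp1 hcyc
  have hper := S.period hr hrk hnk
  set T := (3 * n + k + 1) * p with hT
  have hTbig : 3 * n + k + 1 ≤ T := Nat.le_mul_of_pos_right _ hp1
  have hTl : bulg^[T] l = l := cycle_mul hcyc _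
  have e1 := rep' hn1 hl (t := T + k) (by omega)
  have e2 := rep' hn1 hl (t := T) (by omega)
  have key : ((Multiset.range (T + k)).map (fun j => cs l j - (T + k - 1 - j)))
      = (Multiset.range k).map (fun j => cs l j - (T + k - 1 - j))
        + (Multiset.range T).map (fun j => cs l j - (T - 1 - j)) := by
    rw [add_comm T k, Multiset.range_add, Multiset.map_add, Multiset.map_map]
    congr 1
    refine Multiset.map_congr rfl (fun j hj => ?_)
    have hjT : j < T := Multiset.mem_range.mp hj
    simp only [Function.comp]
    by_cases hj2 : 2 * n ≤ j
    · have hcc : cs l (j + k) = cs l j := hper j hj2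
      rw [show k + j = j + k by omega, hcc]
      congr 1
      omega
    · have h1 : cs l (k + j) ≤ n := cs_le hn1 hl _
      have h2 : cs l j ≤ n := cs_le hn1 hl _
      omega
  have hzero : ((Multiset.range k).map (fun j => cs l j - (T + k - 1 - j))).filter (0 < ·) = 0 := by
    rw [Multiset.filter_eq_nil]
    intro a ha
    obtain ⟨j, hj, rfl⟩ := Multiset.mem_map.mp ha
    have hjk : j < k := Multiset.mem_range.mp hj
    have h1 : cs l j ≤ n := cs_le hn1 hl _
    omega
  have final : bulg^[T + k] l = bulg^[T] l := by
    rw [e1, e2, key, Multiset.filter_add, hzero, zero_add]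
  calc bulg^[k] l = bulg^[k] (bulg^[T] l) := by rw [hTl]
    _ = bulg^[k + T] l := (Function.iterate_add_apply bulg k T l).symm
    _ = bulg^[T + k] l := by rw [add_comm]
    _ = bulg^[T] l := final
    _ = l := hTl

end CycleAux

/-- For n = (k-1)k/2 + r with 0 < r ≤ k, every cycle length of the Bulgarian
solitaire on partitions of n divides k: any partition on a cycle satisfies
B^k(λ) = λ. -/
theorem cycle_length_dvd (k r n : ℕ) (hr : 0 < r) (hrk : r ≤ k)
    (hn : n = (k - 1) * k / 2 + r)
    (l : Multiset ℕ) (hl : IsPartition n l)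
    (hcyc : ∃ p : ℕ, 1 ≤ p ∧ bulg^[p] l = l) :
    bulg^[k] l = l := by 
  obtain ⟨p, hp1, hpc⟩ := hcyc
  exact CycleAux.main_concrete k r hr hrk hn hl hp1 hpc
end
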